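/- arXiv:2209.11809 — 11 statements merged into one kernel-verified Lean document; each statement's English description precedes it below -/
import Mathlib

section
/- Let α = (α_{i,j}) be a feasible allocation, i.e. α_{i,j} ≥ 0 for all 1 ≤ i ≤ K, 1 ≤ j ≤ D and Σ_{i,j} α_{i,j} = 1. Then α is an optimal solution of the problem of maximizing min_{i ≠ b} G_i(α_b, α_i) over feasible allocations if and only if all coordinates α_{i,j} are strictly positive and the following three conditions hold: (Input Balance) α_{i,j}/(σ_{i,j} w_j) = α_{i,j'}/(σ_{i,j'} w_{j'}) for every i ≠ b and every 1 ≤ j < j' ≤ D; (Total Balance) (α_{b,j}/σ_{b,j})² = Σ_{i ≠ b} (α_{i,j}/σ_{i,j})² for every 1 ≤ j ≤ D; (Local Balance) G_i(α_b, α_i) = G_{i'}(α_b, α_{i'}) for all i ≠ i' with i, i' ≠ b. -/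
/-!
Write `c i j = σ i j * w j` and `H_i(β) = ∑ⱼ c_{bj}² / β_{bj} + ∑ⱼ c_{ij}² / β_{ij}` (`diffVar`),
so that `G_i = (μ_b - μ_i)² / (2 H_i)`. Input and Total Balance say exactly that
`α_{ij} = k_i c_{ij}` with `k_b² = ∑_{i ≠ b} k_i²` (`IsBalanced`). For such `α` and positive `β`,
`∑_{i ≠ b} k_i² H_i(β) = ∑_{ij} α_{ij}² / β_{ij} ≥ ∑_{ij} (2 α_{ij} - β_{ij})`, with equality only
at `β = α`; for feasible `α`, `β` the right-hand side is `1 = ∑_{i ≠ b} k_i² H_i(α)`. So no other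
feasible `β` has `H_i(β) ≤ H_i(α)` for all `i ≠ b`: a balanced allocation with equal rates `G_i`
is optimal, and, as an intermediate value argument produces one, it is the only optimum.
-/

open Finset

variable {ι κ : Type*}

lemma two_mul_sub_le_sq_div {x : ℝ} (hx : 0 < x) (y : ℝ) : 2 * y - x ≤ y ^ 2 / x := by
  rw [le_div_iff₀ hx]
  nlinarith [sq_nonneg (y - x)]

lemma eq_of_sq_div_eq_two_mul_sub {x y : ℝ} (hx : 0 < x) (h : y ^ 2 / x = 2 * y - x) :
    y = x := by
  rw [div_eq_iff hx.ne'] at h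
  have : (y - x) ^ 2 = 0 := by linear_combination h
  exact sub_eq_zero.mp (pow_eq_zero_iff two_ne_zero |>.mp this)

lemma eq_of_sum_sq_div_le_sum [Fintype ι] {f g : ι → ℝ} (hg : ∀ i, 0 < g i)
    (hfg : ∑ i, f i = ∑ i, g i) (h : ∑ i, f i ^ 2 / g i ≤ ∑ i, f i) : f = g := by
  have hle : ∀ i ∈ univ, 2 * f i - g i ≤ f i ^ 2 / g i :=
    fun i _ => two_mul_sub_le_sq_div (hg i) (f i)
  have hlin : ∑ i, (2 * f i - g i) = ∑ i, f i := by
    rw [sum_sub_distrib, ← mul_sum, ← hfg]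
    ring
  have heq : ∑ i, (2 * f i - g i) = ∑ i, f i ^ 2 / g i :=
    le_antisymm (sum_le_sum hle) (hlin ▸ h)
  funext i
  exact eq_of_sq_div_eq_two_mul_sub (hg i) ((sum_eq_sum_iff_of_le hle).mp heq i (mem_univ i)).symm

lemma eq_of_sum_sum_sq_div_le_sum_sum [Fintype ι] [Fintype κ] {f g : ι → κ → ℝ}
    (hg : ∀ i j, 0 < g i j) (hfg : ∑ i, ∑ j, f i j = ∑ i, ∑ j, g i j)
    (h : ∑ i, ∑ j, f i j ^ 2 / g i j ≤ ∑ i, ∑ j, f i j) : f = g := by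
  simp only [← Fintype.sum_prod_type'] at hfg h
  exact Function.uncurry_injective (eq_of_sum_sq_div_le_sum (fun p => hg p.1 p.2) hfg h)

section Balanced

variable [Fintype ι] [DecidableEq ι] (c : ι → κ → ℝ) (b : ι)

def IsBalanced (α : ι → κ → ℝ) : Prop :=
  ∃ k : ι → ℝ, (∀ i j, α i j = k i * c i j) ∧ k b ^ 2 = ∑ i ∈ univ.erase b, k i ^ 2

variable {c b} {α : ι → κ → ℝ}

lemma IsBalanced.div_eq_div (hα : IsBalanced c b α) (hc : ∀ i j, c i j ≠ 0)
    (i : ι) (j j' : κ) : α i j / c i j = α i j' / c i j' := by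
  obtain ⟨k, hαk, -⟩ := hα
  rw [hαk, hαk, mul_div_cancel_right₀ _ (hc i j), mul_div_cancel_right₀ _ (hc i j')]

lemma IsBalanced.sq_div_eq_sum {σ : ι → κ → ℝ} {w : κ → ℝ}
    (hα : IsBalanced (fun i j => σ i j * w j) b α) (hσ : ∀ i j, σ i j ≠ 0) (j : κ) :
    (α b j / σ b j) ^ 2 = ∑ i ∈ univ.erase b, (α i j / σ i j) ^ 2 := by
  obtain ⟨k, hαk, hk⟩ := hα
  have hrow : ∀ i, (α i j / σ i j) ^ 2 = k i ^ 2 * w j ^ 2 := fun i => by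
    rw [hαk]
    field_simp [hσ i j]
  simp only [hrow, ← sum_mul, hk]

lemma isBalanced_of_div_eq_div [LinearOrder κ] [Nonempty κ] {σ : ι → κ → ℝ} {w : κ → ℝ}
    (hσ : ∀ i j, 0 < σ i j) (hw : ∀ j, 0 < w j) (hα : ∀ i j, 0 ≤ α i j)
    (hinput : ∀ i, i ≠ b → ∀ j j' : κ, j < j' →
      α i j / (σ i j * w j) = α i j' / (σ i j' * w j'))
    (htotal : ∀ j, (α b j / σ b j) ^ 2 = ∑ i ∈ univ.erase b, (α i j / σ i j) ^ 2) :
    IsBalanced (fun i j => σ i j * w j) b α := by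
  obtain ⟨j₀⟩ := ‹Nonempty κ›
  set r : ι → ℝ := fun i => α i j₀ / (σ i j₀ * w j₀)
  have hrow : ∀ i ≠ b, ∀ j, α i j = r i * (σ i j * w j) := by
    intro i hi j
    have hratio : α i j / (σ i j * w j) = r i := by
      rcases lt_trichotomy j j₀ with h | rfl | h
      · exact hinput i hi j j₀ h
      · rfl
      · exact (hinput i hi j₀ j h).symm
    rw [← hratio, div_mul_cancel₀ _ (mul_pos (hσ i j) (hw j)).ne']
  have hr : 0 ≤ ∑ i ∈ univ.erase b, r i ^ 2 := sum_nonneg fun i _ => sq_nonneg _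
  set u := √(∑ i ∈ univ.erase b, r i ^ 2)
  have hrow_b : ∀ j, α b j = u * (σ b j * w j) := by
    intro j
    have hsq : (α b j / σ b j) ^ 2 = (u * w j) ^ 2 := by
      rw [htotal, mul_pow, Real.sq_sqrt hr, sum_mul]
      refine sum_congr rfl fun i hi => ?_
      rw [hrow i (ne_of_mem_erase hi)]
      field_simp [(hσ i j).ne']
    rw [pow_left_inj₀ (div_nonneg (hα b j) (hσ b j).le)
      (mul_nonneg (Real.sqrt_nonneg _) (hw j).le) two_ne_zero, div_eq_iff (hσ b j).ne'] at hsq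
    rw [hsq]
    ring
  refine ⟨Function.update r b u, fun i j => ?_, ?_⟩
  · rcases eq_or_ne i b with rfl | hi
    · rw [Function.update_self, hrow_b]
    · rw [Function.update_of_ne hi, hrow i hi]
  · rw [Function.update_self, Real.sq_sqrt hr]
    exact sum_congr rfl fun i hi => by rw [Function.update_of_ne (ne_of_mem_erase hi)]

end Balanced

section DiffVar

variable [Fintype κ] (c : ι → κ → ℝ) (b : ι)

/-- With `c i j = σ i j * w j`, this is the denominator of `G_i` without the factor `2`. -/
noncomputable def diffVar (γ : ι → κ → ℝ) (i : ι) : ℝ :=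
  ∑ j, c b j ^ 2 / γ b j + ∑ j, c i j ^ 2 / γ i j

lemma diffVar_pos [Nonempty κ] (hc : ∀ i j, 0 < c i j) {γ : ι → κ → ℝ}
    (hγ : ∀ i j, 0 < γ i j) (i : ι) : 0 < diffVar c b γ i := by
  have hrow : ∀ i, 0 < ∑ j, c i j ^ 2 / γ i j := fun i =>
    sum_pos (fun j _ => div_pos (pow_pos (hc i j) 2) (hγ i j)) univ_nonempty
  exact add_pos (hrow b) (hrow i)

lemma sq_div_mul_self (a k : ℝ) : a ^ 2 / (k * a) = a / k := by
  rcases eq_or_ne a 0 with rfl | ha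
  · simp
  · rw [sq, mul_div_mul_right _ _ ha]

lemma diffVar_mul_left (k : ι → ℝ) (i : ι) :
    diffVar c b (fun i j => k i * c i j) i = (∑ j, c b j) / k b + (∑ j, c i j) / k i := by
  simp only [diffVar, sq_div_mul_self, sum_div]

variable [Fintype ι] [DecidableEq ι]

lemma sum_erase_sq_mul_diffVar {k : ι → ℝ} (hk : k b ^ 2 = ∑ i ∈ univ.erase b, k i ^ 2)
    (γ : ι → κ → ℝ) :
    ∑ i ∈ univ.erase b, k i ^ 2 * diffVar c b γ i = ∑ i, ∑ j, (k i * c i j) ^ 2 / γ i j := by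
  simp only [diffVar, mul_add, sum_add_distrib, ← sum_mul, ← hk]
  rw [add_sum_erase univ (fun i => k i ^ 2 * ∑ j, c i j ^ 2 / γ i j) (mem_univ b)]
  simp only [mul_sum, mul_pow, mul_div_assoc]

variable {c b}

lemma IsBalanced.eq_of_diffVar_le {α β : ι → κ → ℝ} (hα : IsBalanced c b α)
    (hβ : ∀ i j, 0 < β i j) (hsum : ∑ i, ∑ j, α i j = ∑ i, ∑ j, β i j)
    (hle : ∀ i ≠ b, diffVar c b β i ≤ diffVar c b α i) : α = β := by
  obtain ⟨k, hαk, hk⟩ := hα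
  have hweighted := sum_erase_sq_mul_diffVar c b hk
  simp only [← hαk] at hweighted
  refine eq_of_sum_sum_sq_div_le_sum_sum hβ hsum ?_
  calc ∑ i, ∑ j, α i j ^ 2 / β i j = ∑ i ∈ univ.erase b, k i ^ 2 * diffVar c b β i :=
        (hweighted β).symm
    _ ≤ ∑ i ∈ univ.erase b, k i ^ 2 * diffVar c b α i :=
        sum_le_sum fun i hi => mul_le_mul_of_nonneg_left (hle i (ne_of_mem_erase hi)) (sq_nonneg _)
    _ = ∑ i, ∑ j, α i j := by rw [hweighted]; simp only [sq, mul_self_div_self]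

end DiffVar

lemma exists_sum_sq_eq_one_and_add_div_eq_div {s : Finset ι} (hs : s.Nonempty) {a : ℝ}
    (ha : 0 < a) {S d : ι → ℝ} (hS : ∀ i ∈ s, 0 < S i) (hd : ∀ i ∈ s, 0 < d i) :
    ∃ g > 0, ∃ k : ι → ℝ, (∀ i ∈ s, 0 < k i) ∧ ∑ i ∈ s, k i ^ 2 = 1 ∧
      ∀ i ∈ s, a + S i / k i = d i / g := by
  obtain ⟨i₀, hi₀, hmin⟩ := s.exists_min_image d hs
  have hden₀ : 0 < S i₀ + a := add_pos (hS i₀ hi₀) ha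
  set g₀ := d i₀ / (S i₀ + a)
  have hg₀ : (S i₀ + a) * g₀ = d i₀ := mul_div_cancel₀ _ hden₀.ne'
  have hden : ∀ g ∈ Set.Icc 0 g₀, ∀ i ∈ s, 0 < d i - a * g := fun g hg i hi => by
    nlinarith [hmin i hi, hS i₀ hi₀, hd i₀ hi₀, div_pos (hd i₀ hi₀) hden₀, hg.2]
  -- `k g i` solves `a + S i / k = d i / g`; on `[0, g₀]` the sum of squares of `k g` runs from
  -- `0` to at least `k g₀ i₀ ^ 2 = 1`.
  set k : ℝ → ι → ℝ := fun g i => S i * g / (d i - a * g)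
  have hcont : ContinuousOn (fun g => ∑ i ∈ s, k g i ^ 2) (Set.Icc 0 g₀) :=
    continuousOn_finsetSum s fun i hi => ((continuousOn_const.mul continuousOn_id).div
      (continuousOn_const.sub (continuousOn_const.mul continuousOn_id))
      fun g hg => (hden g hg i hi).ne').pow 2
  have hg₀_nonneg : 0 ≤ g₀ := (div_pos (hd i₀ hi₀) hden₀).le
  have hk₀ : k g₀ i₀ = 1 := by
    rw [div_eq_one_iff_eq (hden g₀ ⟨hg₀_nonneg, le_rfl⟩ i₀ hi₀).ne']
    linarith
  have h_mem : (1 : ℝ) ∈ Set.Icc (∑ i ∈ s, k 0 i ^ 2) (∑ i ∈ s, k g₀ i ^ 2) := by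
    refine ⟨by simp [k], ?_⟩
    calc (1 : ℝ) = k g₀ i₀ ^ 2 := by rw [hk₀, one_pow]
      _ ≤ ∑ i ∈ s, k g₀ i ^ 2 := single_le_sum (fun i _ => sq_nonneg (k g₀ i)) hi₀
  obtain ⟨g, hg, hsum⟩ := intermediate_value_Icc hg₀_nonneg hcont h_mem
  have hg_pos : 0 < g := hg.1.lt_of_ne (by rintro rfl; simp [k] at hsum)
  refine ⟨g, hg_pos, k g, fun i hi => div_pos (mul_pos (hS i hi) hg_pos) (hden g hg i hi),
    hsum, fun i hi => ?_⟩
  simp only [k]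
  field_simp [(hden g hg i hi).ne', (hS i hi).ne']
  ring

lemma exists_isBalanced_diffVar_eq_mul [Fintype ι] [DecidableEq ι] [Fintype κ] [Nonempty κ]
    {c : ι → κ → ℝ} {b : ι} (hc : ∀ i j, 0 < c i j) {d : ι → ℝ} (hd : ∀ i ≠ b, 0 < d i)
    (hb : ∃ i, i ≠ b) :
    ∃ α, IsBalanced c b α ∧ (∀ i j, 0 < α i j) ∧ ∑ i, ∑ j, α i j = 1 ∧
      ∃ t > 0, ∀ i ≠ b, diffVar c b α i = t * d i := by
  set S : ι → ℝ := fun i => ∑ j, c i j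
  have hS : ∀ i, 0 < S i := fun i => sum_pos (fun j _ => hc i j) univ_nonempty
  obtain ⟨i₁, hi₁⟩ := hb
  obtain ⟨g, hg, k, hk, hk1, hkd⟩ := exists_sum_sq_eq_one_and_add_div_eq_div
    (s := univ.erase b) ⟨i₁, mem_erase.mpr ⟨hi₁, mem_univ i₁⟩⟩ (hS b) (fun i _ => hS i)
    (fun i hi => hd i (ne_of_mem_erase hi))
  set k' := Function.update k b 1
  have hk'b : k' b = 1 := Function.update_self ..
  have hk'i : ∀ i ≠ b, k' i = k i := fun i hi => Function.update_of_ne hi ..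
  have hk' : ∀ i, 0 < k' i := fun i => by
    rcases eq_or_ne i b with rfl | hi
    · rw [hk'b]; exact one_pos
    · rw [hk'i i hi]; exact hk i (mem_erase.mpr ⟨hi, mem_univ i⟩)
  set T := ∑ i, k' i * S i
  have hT : 0 < T := sum_pos (fun i _ => mul_pos (hk' i) (hS i)) ⟨b, mem_univ b⟩
  refine ⟨fun i j => k' i / T * c i j, ⟨fun i => k' i / T, fun i j => rfl, ?_⟩,
    fun i j => mul_pos (div_pos (hk' i) hT) (hc i j), ?_, T / g, div_pos hT hg, fun i hi => ?_⟩
  · have : ∀ i ∈ univ.erase b, (k' i / T) ^ 2 = k i ^ 2 / T ^ 2 := fun i hi => by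
      rw [div_pow, hk'i i (ne_of_mem_erase hi)]
    rw [sum_congr rfl this, ← sum_div, hk1, div_pow, hk'b, one_pow]
  · simp only [← mul_sum, ← sum_div, div_mul_eq_mul_div]
    exact div_self hT.ne'
  · rw [diffVar_mul_left]
    change S b / _ + S i / _ = _
    have hi' : i ∈ univ.erase b := mem_erase.mpr ⟨hi, mem_univ i⟩
    rw [hk'b, hk'i i hi, div_mul_eq_mul_div, mul_div_assoc, ← hkd i hi']
    field_simp [(hk i hi').ne']

section MinRate

variable {X : Type*} (b : ι) (G : ι → X → ℝ)

noncomputable def minRate (β : X) : ℝ :=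
  ⨅ i : {i : ι // i ≠ b}, G i.1 β

variable {b G} [Finite ι]

lemma minRate_le (β : X) {i : ι} (hi : i ≠ b) : minRate b G β ≤ G i β :=
  ciInf_le (f := fun i : {i : ι // i ≠ b} => G i.1 β) (Set.finite_range _).bddBelow ⟨i, hi⟩

lemma minRate_eq_of_forall_eq [Nontrivial ι] {β : X} {v : ℝ} (hv : ∀ i ≠ b, G i β = v) :
    minRate b G β = v := by
  obtain ⟨i₁, hi₁⟩ := exists_ne b
  have : Nonempty {i : ι // i ≠ b} := ⟨⟨i₁, hi₁⟩⟩
  exact le_antisymm ((minRate_le β hi₁).trans (hv i₁ hi₁).le) (le_ciInf fun i => (hv i.1 i.2).ge)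

end MinRate

section Rate

variable [Fintype κ] (c : ι → κ → ℝ) (b : ι)

def IsRateFunction (G : ι → (ι → κ → ℝ) → ℝ) (d : ι → ℝ) : Prop :=
  (∀ i β, (∀ j, 0 < β b j) → (∀ j, 0 < β i j) → G i β = d i / (2 * diffVar c b β i)) ∧
    ∀ i β, (∃ j, β b j = 0 ∨ β i j = 0) → G i β = 0

variable {c b} {G : ι → (ι → κ → ℝ) → ℝ} {d : ι → ℝ}

namespace IsRateFunction

lemma apply_pos [Nonempty κ] (hG : IsRateFunction c b G d) (hc : ∀ i j, 0 < c i j)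
    (hd : ∀ i ≠ b, 0 < d i) {β : ι → κ → ℝ} (hβ : ∀ i j, 0 < β i j) {i : ι} (hi : i ≠ b) :
    0 < G i β := by
  rw [hG.1 i β (hβ b) (hβ i)]
  exact div_pos (hd i hi) (mul_pos two_pos (diffVar_pos c b hc hβ i))

lemma rows_pos (hG : IsRateFunction c b G d) {β : ι → κ → ℝ} (hβ : ∀ i j, 0 ≤ β i j) {i : ι}
    (h : 0 < G i β) : (∀ j, 0 < β b j) ∧ ∀ j, 0 < β i j :=
  ⟨fun j => (hβ b j).lt_of_ne' fun h0 => h.ne' (hG.2 i β ⟨j, Or.inl h0⟩),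
    fun j => (hβ i j).lt_of_ne' fun h0 => h.ne' (hG.2 i β ⟨j, Or.inr h0⟩)⟩

variable [Fintype ι] [DecidableEq ι]

lemma eq_of_forall_le [Nontrivial ι] [Nonempty κ] (hG : IsRateFunction c b G d)
    (hc : ∀ i j, 0 < c i j) (hd : ∀ i ≠ b, 0 < d i) {α β : ι → κ → ℝ} (hα : IsBalanced c b α)
    (hαpos : ∀ i j, 0 < α i j) (hβ : ∀ i j, 0 ≤ β i j)
    (hsum : ∑ i, ∑ j, α i j = ∑ i, ∑ j, β i j) (hle : ∀ i ≠ b, G i α ≤ G i β) : α = β := by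
  have hrows : ∀ i ≠ b, (∀ j, 0 < β b j) ∧ ∀ j, 0 < β i j := fun i hi =>
    hG.rows_pos hβ ((hG.apply_pos hc hd hαpos hi).trans_le (hle i hi))
  have hβpos : ∀ i j, 0 < β i j := fun i j => by
    rcases eq_or_ne i b with rfl | hi
    · obtain ⟨i₁, hi₁⟩ := exists_ne i
      exact (hrows i₁ hi₁).1 j
    · exact (hrows i hi).2 j
  refine hα.eq_of_diffVar_le hβpos hsum fun i hi => ?_
  have h := hle i hi
  rw [hG.1 i α (hαpos b) (hαpos i), hG.1 i β (hβpos b) (hβpos i),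
    div_le_div_iff_of_pos_left (hd i hi) (mul_pos two_pos (diffVar_pos c b hc hαpos i))
      (mul_pos two_pos (diffVar_pos c b hc hβpos i))] at h
  exact le_of_mul_le_mul_left h two_pos

lemma isBalanced_of_isOptimal [Nontrivial ι] [Nonempty κ] (hG : IsRateFunction c b G d)
    (hc : ∀ i j, 0 < c i j) (hd : ∀ i ≠ b, 0 < d i) {α : ι → κ → ℝ} (hα : ∀ i j, 0 ≤ α i j)
    (hα1 : ∑ i, ∑ j, α i j = 1)
    (hopt : ∀ α' : ι → κ → ℝ, (∀ i j, 0 ≤ α' i j) → ∑ i, ∑ j, α' i j = 1 →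
      minRate b G α' ≤ minRate b G α) :
    (∀ i j, 0 < α i j) ∧ IsBalanced c b α ∧ ∃ v, ∀ i ≠ b, G i α = v := by
  obtain ⟨α', hbal, hpos, hsum, t, ht, hdiff⟩ :=
    exists_isBalanced_diffVar_eq_mul hc hd (exists_ne b)
  have hG' : ∀ i ≠ b, G i α' = 1 / (2 * t) := fun i hi => by
    rw [hG.1 i α' (hpos b) (hpos i), hdiff i hi]
    field_simp [(hd i hi).ne']
  have hmin : minRate b G α' = 1 / (2 * t) := minRate_eq_of_forall_eq hG'
  have hle : ∀ i ≠ b, G i α' ≤ G i α := fun i hi => calc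
    G i α' = minRate b G α' := (hG' i hi).trans hmin.symm
    _ ≤ minRate b G α := hopt α' (fun i j => (hpos i j).le) hsum
    _ ≤ G i α := minRate_le α hi
  obtain rfl := hG.eq_of_forall_le hc hd hbal hpos hα (hsum.trans hα1.symm) hle
  exact ⟨hpos, hbal, _, hG'⟩

lemma isOptimal_of_isBalanced [Nontrivial ι] [Nonempty κ] (hG : IsRateFunction c b G d)
    (hc : ∀ i j, 0 < c i j) (hd : ∀ i ≠ b, 0 < d i) {α : ι → κ → ℝ} (hbal : IsBalanced c b α)
    (hpos : ∀ i j, 0 < α i j) (hα1 : ∑ i, ∑ j, α i j = 1) {v : ℝ} (hv : ∀ i ≠ b, G i α = v)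
    (α' : ι → κ → ℝ) (hα' : ∀ i j, 0 ≤ α' i j) (hα'1 : ∑ i, ∑ j, α' i j = 1) :
    minRate b G α' ≤ minRate b G α := by
  rw [minRate_eq_of_forall_eq hv]
  by_contra! hlt
  have hle : ∀ i ≠ b, G i α ≤ G i α' := fun i hi =>
    (hv i hi).trans_le (hlt.le.trans (minRate_le α' hi))
  obtain rfl := hG.eq_of_forall_le hc hd hbal hpos hα' (hα1.trans hα'1.symm) hle
  exact hlt.ne (minRate_eq_of_forall_eq hv).symm

end IsRateFunction

end Rate

theorem stmt_0_general
    {K D : ℕ} (hK : 2 ≤ K) (hD : 1 ≤ D)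
    (b : Fin K)
    (σ : Fin K → Fin D → ℝ) (hσ : ∀ i j, 0 < σ i j)
    (w : Fin D → ℝ) (hw : ∀ j, 0 < w j)
    (μbar : Fin K → ℝ)
    (hbest : ∀ i, i ≠ b → μbar i < μbar b)
    (G : Fin K → (Fin K → Fin D → ℝ) → ℝ)
    (hGpos : ∀ i α, (∀ j, 0 < α b j) → (∀ j, 0 < α i j) →
      G i α = (μbar b - μbar i) ^ 2 /
        (2 * (∑ j, (σ b j) ^ 2 * (w j) ^ 2 / α b j
            + ∑ j, (σ i j) ^ 2 * (w j) ^ 2 / α i j)))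
    (hGzero : ∀ i α, (∃ j, α b j = 0 ∨ α i j = 0) → G i α = 0)
    (α : Fin K → Fin D → ℝ)
    (hα0 : ∀ i j, 0 ≤ α i j) (hα1 : ∑ i, ∑ j, α i j = 1) :
    ((∀ α' : Fin K → Fin D → ℝ, (∀ i j, 0 ≤ α' i j) → ∑ i, ∑ j, α' i j = 1 →
        (⨅ i : {i : Fin K // i ≠ b}, G i.1 α') ≤ ⨅ i : {i : Fin K // i ≠ b}, G i.1 α)
      ↔
      ((∀ i j, 0 < α i j) ∧
        (∀ i, i ≠ b → ∀ j j' : Fin D, j < j' →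
          α i j / (σ i j * w j) = α i j' / (σ i j' * w j')) ∧
        (∀ j, (α b j / σ b j) ^ 2 = ∑ i ∈ univ.erase b, (α i j / σ i j) ^ 2) ∧
        (∀ i i' : Fin K, i ≠ b → i' ≠ b → i ≠ i' → G i α = G i' α))) := by
  have : Nontrivial (Fin K) := Fin.nontrivial_iff_two_le.mpr hK
  have : Nonempty (Fin D) := ⟨⟨0, hD⟩⟩
  have hc : ∀ i j, 0 < σ i j * w j := fun i j => mul_pos (hσ i j) (hw j)
  have hd : ∀ i ≠ b, 0 < (μbar b - μbar i) ^ 2 := fun i hi => pow_pos (sub_pos.mpr (hbest i hi)) 2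
  have hG : IsRateFunction (fun i j => σ i j * w j) b G fun i => (μbar b - μbar i) ^ 2 :=
    ⟨fun i β hb hi => by simp only [hGpos i β hb hi, diffVar, mul_pow], hGzero⟩
  constructor
  · intro hopt
    obtain ⟨hpos, hbal, v, hv⟩ := hG.isBalanced_of_isOptimal hc hd hα0 hα1 hopt
    exact ⟨hpos, fun i _ j j' _ => hbal.div_eq_div (fun i j => (hc i j).ne') i j j',
      hbal.sq_div_eq_sum fun i j => (hσ i j).ne',
      fun i i' hi hi' _ => (hv i hi).trans (hv i' hi').symm⟩
  · rintro ⟨hpos, hinput, htotal, hlocal⟩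
    obtain ⟨i₁, hi₁⟩ := exists_ne b
    refine hG.isOptimal_of_isBalanced hc hd (isBalanced_of_div_eq_div hσ hw hα0 hinput htotal)
      hpos hα1 (v := G i₁ α) fun i hi => ?_
    rcases eq_or_ne i i₁ with rfl | h
    · rfl
    · exact hlocal i i₁ hi hi₁ h

/-- Optimality conditions (Input Balance, Total Balance, Local Balance) characterize the
optimal budget allocation for the rate-maximization problem. -/
theorem stmt_0
    {K D : ℕ} (hK : 2 ≤ K) (hD : 1 ≤ D)
    (b : Fin K)
    (μ : Fin K → Fin D → ℝ)
    (σ : Fin K → Fin D → ℝ) (hσ : ∀ i j, 0 < σ i j)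
    (w : Fin D → ℝ) (hw : ∀ j, 0 < w j) (hw1 : ∑ j, w j = 1)
    (μbar : Fin K → ℝ) (hμbar : ∀ i, μbar i = ∑ j, w j * μ i j)
    (hbest : ∀ i, i ≠ b → μbar i < μbar b)
    (G : Fin K → (Fin K → Fin D → ℝ) → ℝ)
    (hGpos : ∀ i α, (∀ j, 0 < α b j) → (∀ j, 0 < α i j) →
      G i α = (μbar b - μbar i) ^ 2 /
        (2 * (∑ j, (σ b j) ^ 2 * (w j) ^ 2 / α b j
            + ∑ j, (σ i j) ^ 2 * (w j) ^ 2 / α i j)))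
    (hGzero : ∀ i α, (∃ j, α b j = 0 ∨ α i j = 0) → G i α = 0)
    (α : Fin K → Fin D → ℝ)
    (hα0 : ∀ i j, 0 ≤ α i j) (hα1 : ∑ i, ∑ j, α i j = 1) :
    ((∀ α' : Fin K → Fin D → ℝ, (∀ i j, 0 ≤ α' i j) → ∑ i, ∑ j, α' i j = 1 →
        (⨅ i : {i : Fin K // i ≠ b}, G i.1 α') ≤ ⨅ i : {i : Fin K // i ≠ b}, G i.1 α)
      ↔
      ((∀ i j, 0 < α i j) ∧
        (∀ i, i ≠ b → ∀ j j' : Fin D, j < j' →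
          α i j / (σ i j * w j) = α i j' / (σ i j' * w j')) ∧
        (∀ j, (α b j / σ b j) ^ 2 = ∑ i ∈ univ.erase b, (α i j / σ i j) ^ 2) ∧
        (∀ i i' : Fin K, i ≠ b → i' ≠ b → i ≠ i' → G i α = G i' α))) :=
  stmt_0_general hK hD b σ hσ w hw μbar hbest G hGpos hGzero α hα0 hα1
end

section
/- The problem of maximizing min_{i ≠ b} G_i(α_b, α_i) over feasible allocations α (α_{i,j} ≥ 0, Σ_{i,j} α_{i,j} = 1) has a unique optimal solution α*. Equivalently, there is exactly one strictly positive feasible allocation satisfying simultaneously: α_{i,j}/(σ_{i,j} w_j) = α_{i,j'}/(σ_{i,j'} w_{j'}) for all i ≠ b and all j, j'; (α_{b,j}/σ_{b,j})² = Σ_{i ≠ b} (α_{i,j}/σ_{i,j})² for all j; and G_i(α_b, α_i) = G_{i'}(α_b, α_{i'}) for all i ≠ i' with i, i' ≠ b. -/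
open Finset

/-!
Write `V_i(α) = ∑_j σ_{ij}² w_j² / α_{ij}`, so that `G_i = δ_i² / (2 (V_b + V_i))` with
`δ_i = μ_b - μ_i`, and `S_i = ∑_j σ_{ij} w_j`. On an allocation `ρ_i σ_{ij} w_j`, whose rows are
proportional to `σ_i w`, one has `V_i = S_i / ρ_i`; for any allocation, AM-GM gives
`∑_j α_{ij} + ρ_i² V_i(α) ≥ 2 ρ_i S_i`, with equality only for the row `ρ_i σ_i w`.
If `ρ` is balanced, `∑_{i ≠ b} ρ_i² = ρ_b²`, then `∑_i ρ_i² V_i = ∑_{i ≠ b} ρ_i² (V_b + V_i)`, so an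
allocation of the same budget whose rates are all at least those of `ρ σ w` has no larger
`∑_i ρ_i² V_i`, and summing the AM-GM inequalities forces it to be `ρ σ w`. Hence a balanced
proportional allocation with equal rates is the unique maximizer of the minimal rate, and any two
of them coincide; the three conditions of the statement describe exactly these allocations.
One exists by the intermediate value theorem: for `ρ_b = S_b` and common rate `v / 2` one needs
`ρ_i = S_i v / (δ_i² - v)`, and the balance equation then has a root `v ∈ (0, min δ_i²)`.
-/

section Balance

variable {ι : Type*} [Fintype ι] [DecidableEq ι]

theorem sum_mul_eq_sum_erase_mul_add {θ : ι → ℝ} {b : ι} (hθ : ∑ i ∈ univ.erase b, θ i = θ b)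
    (f : ι → ℝ) : ∑ i, θ i * f i = ∑ i ∈ univ.erase b, θ i * (f b + f i) := by
  rw [← add_sum_erase _ _ (mem_univ b)]
  simp only [mul_add, sum_add_distrib, ← sum_mul, hθ]

theorem sum_mul_le_sum_mul_of_add_le {θ f g : ι → ℝ} {b : ι}
    (hθ : ∑ i ∈ univ.erase b, θ i = θ b) (hθ0 : ∀ i, 0 ≤ θ i)
    (hle : ∀ i ≠ b, f b + f i ≤ g b + g i) : ∑ i, θ i * f i ≤ ∑ i, θ i * g i := by
  rw [sum_mul_eq_sum_erase_mul_add hθ, sum_mul_eq_sum_erase_mul_add hθ]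
  exact sum_le_sum fun i hi => mul_le_mul_of_nonneg_left (hle i (ne_of_mem_erase hi)) (hθ0 i)

end Balance

theorem sum_sq_sub_mul_div_eq {κ : Type*} [Fintype κ] {x c : κ → ℝ} (hx : ∀ j, x j ≠ 0) (r : ℝ) :
    ∑ j, (x j - r * c j) ^ 2 / x j
      = ∑ j, x j - 2 * ∑ j, r * c j + r ^ 2 * ∑ j, c j ^ 2 / x j := by
  rw [mul_sum, mul_sum, ← sum_sub_distrib, ← sum_add_distrib]
  refine sum_congr rfl fun j _ => ?_
  field_simp [hx j]
  ring

theorem exists_sum_sq_mul_div_sub_eq_sq {ι : Type*} {s : Finset ι} (hs : s.Nonempty)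
    {a p : ι → ℝ} (ha : ∀ i ∈ s, 0 < a i) (hp : ∀ i ∈ s, 0 < p i) {c : ℝ} (hc : 0 < c) :
    ∃ v, 0 < v ∧ (∀ i ∈ s, v < p i) ∧ ∑ i ∈ s, (a i * v / (p i - v)) ^ 2 = c ^ 2 := by
  obtain ⟨i₀, hi₀, hmin⟩ := s.exists_min_image p hs
  have ha₀ := ha i₀ hi₀
  have hp₀ := hp i₀ hi₀
  set v₁ := c * p i₀ / (a i₀ + c)
  have hv₁ : 0 < v₁ := by positivity
  have hv₁p : ∀ i ∈ s, v₁ < p i := fun i hi =>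
    lt_of_lt_of_le ((div_lt_iff₀ (by positivity)).2 (by nlinarith)) (hmin i hi)
  set f : ℝ → ℝ := fun v => ∑ i ∈ s, (a i * v / (p i - v)) ^ 2
  have hcont : ContinuousOn f (Set.Icc 0 v₁) := by
    refine continuousOn_finsetSum _ fun i hi => ((continuousOn_const.mul continuousOn_id).div
      (continuousOn_const.sub continuousOn_id) fun v hv => ?_).pow 2
    exact (sub_pos.2 (hv.2.trans_lt (hv₁p i hi))).ne'
  -- `v₁` is chosen so that the `i₀` term alone equals `c ^ 2`
  have hf₁ : c ^ 2 ≤ f v₁ := by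
    have hterm : a i₀ * v₁ / (p i₀ - v₁) = c := by
      rw [div_eq_iff (sub_pos.2 (hv₁p i₀ hi₀)).ne']
      simp only [v₁]
      field_simp
      ring
    calc c ^ 2 = (a i₀ * v₁ / (p i₀ - v₁)) ^ 2 := by rw [hterm]
      _ ≤ f v₁ := single_le_sum (f := fun i => (a i * v₁ / (p i - v₁)) ^ 2)
          (fun i _ => sq_nonneg _) hi₀
  have hf₀ : f 0 = 0 := by simp [f]
  obtain ⟨v, hv, hfv⟩ := intermediate_value_Icc hv₁.le hcont ⟨hf₀.le.trans (by positivity), hf₁⟩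
  have hv0 : v ≠ 0 := by
    rintro rfl
    rw [hf₀] at hfv
    exact (pow_pos hc 2).ne' hfv.symm
  exact ⟨v, lt_of_le_of_ne hv.1 (Ne.symm hv0), fun i hi => hv.2.trans_lt (hv₁p i hi), hfv⟩

section Allocation

variable {ι κ : Type*} [Fintype κ]

noncomputable def propAlloc (c : ι → κ → ℝ) (ρ : ι → ℝ) : ι → κ → ℝ := fun i j => ρ i * c i j

/-- For `c i j = σ i j * w j`, the variance of the estimate of `μ_i` when the fraction `α i j`
of the sampling budget is spent on input `j` (up to the factor `1 / budget`). -/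
noncomputable def designVariance (c α : ι → κ → ℝ) (i : ι) : ℝ := ∑ j, c i j ^ 2 / α i j

variable {c : ι → κ → ℝ} {ρ : ι → ℝ}

omit [Fintype κ] in
theorem propAlloc_pos (hc : ∀ i j, 0 < c i j) (hρ : ∀ i, 0 < ρ i) (i : ι) (j : κ) :
    0 < propAlloc c ρ i j :=
  mul_pos (hρ i) (hc i j)

theorem designVariance_pos [Nonempty κ] {α : ι → κ → ℝ} {i : ι} (hc : ∀ j, 0 < c i j)
    (hα : ∀ j, 0 < α i j) : 0 < designVariance c α i :=
  sum_pos (fun j _ => div_pos (pow_pos (hc j) 2) (hα j)) univ_nonempty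

theorem designVariance_propAlloc {i : ι} (hc : ∀ j, c i j ≠ 0) (hρ : ρ i ≠ 0) :
    designVariance c (propAlloc c ρ) i = (∑ j, c i j) / ρ i := by
  simp only [designVariance, propAlloc, sum_div]
  refine sum_congr rfl fun j _ => ?_
  field_simp [hc j]

theorem eq_propAlloc_of_designVariance_le [Fintype ι] [DecidableEq ι] {α : ι → κ → ℝ} {b : ι}
    (hc : ∀ i j, c i j ≠ 0) (hρ : ∀ i, ρ i ≠ 0) (hbal : ∑ i ∈ univ.erase b, ρ i ^ 2 = ρ b ^ 2)
    (hα : ∀ i j, 0 < α i j) (hsum : ∑ i, ∑ j, α i j = ∑ i, ∑ j, propAlloc c ρ i j)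
    (hle : ∀ i ≠ b, designVariance c α b + designVariance c α i ≤
      designVariance c (propAlloc c ρ) b + designVariance c (propAlloc c ρ) i) :
    α = propAlloc c ρ := by
  have hweighted : ∑ i, ρ i ^ 2 * designVariance c α i ≤ ∑ i, ∑ j, propAlloc c ρ i j :=
    calc _ ≤ ∑ i, ρ i ^ 2 * designVariance c (propAlloc c ρ) i :=
          sum_mul_le_sum_mul_of_add_le hbal (fun i => sq_nonneg _) hle
      _ = _ := sum_congr rfl fun i _ => by
          rw [designVariance_propAlloc (hc i) (hρ i)]
          simp only [propAlloc, ← mul_sum]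
          field_simp [hρ i]
  have hnonneg : ∀ i j, 0 ≤ (α i j - ρ i * c i j) ^ 2 / α i j :=
    fun i j => div_nonneg (sq_nonneg _) (hα i j).le
  have hdev : ∑ i, ∑ j, (α i j - ρ i * c i j) ^ 2 / α i j = 0 := by
    refine le_antisymm ?_ (sum_nonneg fun i _ => sum_nonneg fun j _ => hnonneg i j)
    rw [sum_congr rfl fun i _ => sum_sq_sub_mul_div_eq (fun j => (hα i j).ne') (ρ i),
      sum_add_distrib, sum_sub_distrib, ← mul_sum, hsum]
    simp only [designVariance, propAlloc] at hweighted ⊢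
    linarith
  ext i j
  have hrow := (sum_eq_zero_iff_of_nonneg fun i _ => sum_nonneg fun j _ => hnonneg i j).1
    hdev i (mem_univ i)
  have hterm := (sum_eq_zero_iff_of_nonneg fun j _ => hnonneg i j).1 hrow j (mem_univ j)
  rw [div_eq_zero_iff, or_iff_left (hα i j).ne', sq_eq_zero_iff, sub_eq_zero] at hterm
  exact hterm

/-- The rate function `G` of the statement, with `c i j = σ i j * w j` and `δ i = μ_b - μ_i`. -/
structure IsRateFunction_s1 (c : ι → κ → ℝ) (δ : ι → ℝ) (b : ι) (G : ι → (ι → κ → ℝ) → ℝ) :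
    Prop where
  eq_of_pos : ∀ i α, (∀ j, 0 < α b j) → (∀ j, 0 < α i j) →
    G i α = δ i ^ 2 / (2 * (designVariance c α b + designVariance c α i))
  eq_zero : ∀ i α, (∃ j, α b j = 0 ∨ α i j = 0) → G i α = 0

namespace IsRateFunction_s1

variable [Fintype ι] [DecidableEq ι] [Nonempty κ] {δ : ι → ℝ} {b : ι}
  {G : ι → (ι → κ → ℝ) → ℝ}

theorem eq_propAlloc_of_rate_le (hG : IsRateFunction_s1 c δ b G) (hc : ∀ i j, 0 < c i j)
    (hδ : ∀ i ≠ b, δ i ≠ 0) (hb : ∃ i, i ≠ b) (hρ : ∀ i, 0 < ρ i)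
    (hbal : ∑ i ∈ univ.erase b, ρ i ^ 2 = ρ b ^ 2) {α : ι → κ → ℝ} (hα : ∀ i j, 0 ≤ α i j)
    (hsum : ∑ i, ∑ j, α i j = ∑ i, ∑ j, propAlloc c ρ i j)
    (hle : ∀ i ≠ b, G i (propAlloc c ρ) ≤ G i α) : α = propAlloc c ρ := by
  have hVρ : ∀ i, 0 < designVariance c (propAlloc c ρ) i := fun i =>
    designVariance_pos (hc i) (propAlloc_pos hc hρ i)
  have hGρ : ∀ i ≠ b, 0 < G i (propAlloc c ρ) := fun i hi => by
    rw [hG.eq_of_pos i _ (propAlloc_pos hc hρ b) (propAlloc_pos hc hρ i)]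
    have := hVρ b
    have := hVρ i
    have := hδ i hi
    positivity
  have hαpos : ∀ i j, 0 < α i j := by
    intro i j
    refine (hα i j).lt_of_ne fun h0 => ?_
    obtain ⟨i₁, hi₁, hzero⟩ : ∃ i₁ ≠ b, α b j = 0 ∨ α i₁ j = 0 := by
      by_cases hib : i = b
      · obtain ⟨i₁, hi₁⟩ := hb
        exact ⟨i₁, hi₁, Or.inl (hib ▸ h0.symm)⟩
      · exact ⟨i, hib, Or.inr h0.symm⟩
    linarith [hG.eq_zero i₁ α ⟨j, hzero⟩, hGρ i₁ hi₁, hle i₁ hi₁]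
  refine eq_propAlloc_of_designVariance_le (fun i j => (hc i j).ne') (fun i => (hρ i).ne') hbal
    hαpos hsum fun i hi => ?_
  have hVα : ∀ i, 0 < designVariance c α i := fun i => designVariance_pos (hc i) (hαpos i)
  have h := hle i hi
  rw [hG.eq_of_pos i _ (propAlloc_pos hc hρ b) (propAlloc_pos hc hρ i),
    hG.eq_of_pos i _ (hαpos b) (hαpos i),
    div_le_div_iff_of_pos_left (sq_pos_of_ne_zero (hδ i hi)) (by linarith [hVρ b, hVρ i])
      (by linarith [hVα b, hVα i])] at h
  linarith

theorem propAlloc_eq_of_forall_rate_eq (hG : IsRateFunction_s1 c δ b G) (hc : ∀ i j, 0 < c i j)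
    (hδ : ∀ i ≠ b, δ i ≠ 0) (hb : ∃ i, i ≠ b) {ρ' : ι → ℝ} {γ γ' : ℝ}
    (hρ : ∀ i, 0 < ρ i) (hρ' : ∀ i, 0 < ρ' i) (hbal : ∑ i ∈ univ.erase b, ρ i ^ 2 = ρ b ^ 2)
    (hbal' : ∑ i ∈ univ.erase b, ρ' i ^ 2 = ρ' b ^ 2)
    (hsum : ∑ i, ∑ j, propAlloc c ρ i j = ∑ i, ∑ j, propAlloc c ρ' i j)
    (hγ : ∀ i ≠ b, G i (propAlloc c ρ) = γ) (hγ' : ∀ i ≠ b, G i (propAlloc c ρ') = γ') :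
    propAlloc c ρ = propAlloc c ρ' := by
  rcases le_total γ γ' with h | h
  · refine (hG.eq_propAlloc_of_rate_le hc hδ hb hρ hbal (fun i j => (propAlloc_pos hc hρ' i j).le)
      hsum.symm fun i hi => ?_).symm
    rwa [hγ i hi, hγ' i hi]
  · refine hG.eq_propAlloc_of_rate_le hc hδ hb hρ' hbal' (fun i j => (propAlloc_pos hc hρ i j).le)
      hsum fun i hi => ?_
    rwa [hγ i hi, hγ' i hi]

theorem existsUnique_isMax_iInf (hG : IsRateFunction_s1 c δ b G) (hc : ∀ i j, 0 < c i j)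
    (hδ : ∀ i ≠ b, δ i ≠ 0) (hb : ∃ i, i ≠ b) {γ : ℝ} (hρ : ∀ i, 0 < ρ i)
    (hbal : ∑ i ∈ univ.erase b, ρ i ^ 2 = ρ b ^ 2) (hsum : ∑ i, ∑ j, propAlloc c ρ i j = 1)
    (hγ : ∀ i ≠ b, G i (propAlloc c ρ) = γ) :
    ∃! α : ι → κ → ℝ, (∀ i j, 0 ≤ α i j) ∧ (∑ i, ∑ j, α i j = 1) ∧
      ∀ α' : ι → κ → ℝ, (∀ i j, 0 ≤ α' i j) → ∑ i, ∑ j, α' i j = 1 →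
        (⨅ i : {i : ι // i ≠ b}, G i.1 α') ≤ ⨅ i : {i : ι // i ≠ b}, G i.1 α := by
  have : Nonempty {i : ι // i ≠ b} := let ⟨i, hi⟩ := hb; ⟨⟨i, hi⟩⟩
  have hinf : ⨅ i : {i : ι // i ≠ b}, G i.1 (propAlloc c ρ) = γ := by
    simp only [fun i : {i : ι // i ≠ b} => hγ i.1 i.2, ciInf_const]
  have huniq : ∀ α : ι → κ → ℝ, (∀ i j, 0 ≤ α i j) → ∑ i, ∑ j, α i j = 1 →
      γ ≤ ⨅ i : {i : ι // i ≠ b}, G i.1 α → α = propAlloc c ρ := fun α hα hα1 hle =>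
    hG.eq_propAlloc_of_rate_le hc hδ hb hρ hbal hα (hα1.trans hsum.symm) fun i hi =>
      (hγ i hi).trans_le <| hle.trans <|
        ciInf_le (Finite.bddBelow_range _) (⟨i, hi⟩ : {i : ι // i ≠ b})
  have hρ0 : ∀ i j, 0 ≤ propAlloc c ρ i j := fun i j => (propAlloc_pos hc hρ i j).le
  refine ⟨propAlloc c ρ, ⟨hρ0, hsum, fun α hα hα1 => ?_⟩,
    fun α ⟨hα, hα1, hmax⟩ => huniq α hα hα1 (hinf ▸ hmax _ hρ0 hsum)⟩
  rw [hinf]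
  by_contra! hlt
  rw [huniq α hα hα1 hlt.le, hinf] at hlt
  exact lt_irrefl γ hlt

end IsRateFunction_s1

end Allocation

section Conditions

variable {ι κ : Type*} [Fintype ι] [DecidableEq ι]

theorem exists_balanced_weights {S p : ι → ℝ} {b : ι} (hS : ∀ i, 0 < S i) (hp : ∀ i ≠ b, 0 < p i)
    (hb : ∃ i, i ≠ b) :
    ∃ (ρ : ι → ℝ) (t : ℝ), (∀ i, 0 < ρ i) ∧ ∑ i, ρ i * S i = 1 ∧
      ∑ i ∈ univ.erase b, ρ i ^ 2 = ρ b ^ 2 ∧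
      ∀ i ≠ b, S b / ρ b + S i / ρ i = t * p i := by
  have hmem : ∀ {i}, i ∈ univ.erase b ↔ i ≠ b := by simp
  obtain ⟨v, hv, hvp, hroot⟩ := exists_sum_sq_mul_div_sub_eq_sq (let ⟨i, hi⟩ := hb; ⟨i, hmem.2 hi⟩)
    (fun i _ => hS i) (fun i hi => hp i (hmem.1 hi)) (hS b)
  -- fixing `ρ b = S b` makes the common value of `S b / ρ b + S i / ρ i` equal to `p i / v`
  set r : ι → ℝ := fun i => if i = b then S b else S i * v / (p i - v)
  have hrb : r b = S b := if_pos rfl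
  have hri : ∀ i ≠ b, r i = S i * v / (p i - v) := fun i hi => if_neg hi
  have hr : ∀ i, 0 < r i := fun i => by
    by_cases hi : i = b
    · rw [hi, hrb]; exact hS b
    · rw [hri i hi]; exact div_pos (mul_pos (hS i) hv) (sub_pos.2 (hvp i (hmem.2 hi)))
  set T := ∑ i, r i * S i
  have hT : 0 < T := sum_pos (fun i _ => mul_pos (hr i) (hS i)) ⟨b, mem_univ b⟩
  refine ⟨fun i => r i / T, T / v, fun i => div_pos (hr i) hT, ?_, ?_, fun i hi => ?_⟩
  · simp only [div_mul_eq_mul_div, ← sum_div]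
    exact div_self hT.ne'
  · simp only [div_pow, ← sum_div, hrb]
    rw [← hroot]
    exact congrArg (· / T ^ 2) (sum_congr rfl fun i hi => by rw [hri i (hmem.1 hi)])
  · show S b / (r b / T) + S i / (r i / T) = T / v * p i
    rw [hrb, hri i hi]
    field_simp [(hS b).ne', (hS i).ne']
    ring

theorem balance_conditions_iff {σ : ι → κ → ℝ} {w : κ → ℝ} {b : ι} (hσ : ∀ i j, 0 < σ i j)
    (hw : ∀ j, 0 < w j) (j₀ : κ) {α : ι → κ → ℝ} (hα : ∀ i j, 0 < α i j) :
    ((∀ i, i ≠ b → ∀ j j' : κ, α i j / (σ i j * w j) = α i j' / (σ i j' * w j')) ∧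
      ∀ j, (α b j / σ b j) ^ 2 = ∑ i ∈ univ.erase b, (α i j / σ i j) ^ 2) ↔
    ∃ ρ : ι → ℝ, (∀ i, 0 < ρ i) ∧ ∑ i ∈ univ.erase b, ρ i ^ 2 = ρ b ^ 2 ∧
      α = propAlloc (fun i j => σ i j * w j) ρ := by
  have hquot : ∀ (ρ : ι → ℝ) i j,
      propAlloc (fun i j => σ i j * w j) ρ i j / σ i j = ρ i * w j := fun ρ i j => by
    simp only [propAlloc]
    field_simp [(hσ i j).ne']
  have hsq : ∀ (ρ : ι → ℝ) j,
      ∑ i ∈ univ.erase b, (ρ i * w j) ^ 2 = (∑ i ∈ univ.erase b, ρ i ^ 2) * w j ^ 2 := by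
    simp only [mul_pow, sum_mul, implies_true]
  constructor
  · rintro ⟨hrow, hcol⟩
    set ρ : ι → ℝ := fun i => α i j₀ / (σ i j₀ * w j₀)
    have hρ : ∀ i, 0 < ρ i := fun i => div_pos (hα i j₀) (mul_pos (hσ i j₀) (hw j₀))
    have hprop : ∀ i ≠ b, ∀ j, α i j = propAlloc (fun i j => σ i j * w j) ρ i j :=
      fun i hi j => by
        show α i j = α i j₀ / (σ i j₀ * w j₀) * (σ i j * w j)
        rw [← hrow i hi j j₀, div_mul_cancel₀ _ (mul_pos (hσ i j) (hw j)).ne']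
    have hcol' : ∀ j, (α b j / σ b j) ^ 2 = (∑ i ∈ univ.erase b, ρ i ^ 2) * w j ^ 2 :=
      fun j => by
        rw [hcol j, ← hsq]
        exact sum_congr rfl fun i hi => by rw [hprop i (ne_of_mem_erase hi), hquot]
    have hbal : ∑ i ∈ univ.erase b, ρ i ^ 2 = ρ b ^ 2 := by
      have h := hcol' j₀
      have hρb : α b j₀ / σ b j₀ = ρ b * w j₀ := by
        show _ = α b j₀ / (σ b j₀ * w j₀) * w j₀
        field_simp [(hw j₀).ne']
      rw [hρb, mul_pow] at h
      exact (mul_right_cancel₀ (pow_pos (hw j₀) 2).ne' h).symm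
    refine ⟨ρ, hρ, hbal, funext fun i => funext fun j => ?_⟩
    by_cases hi : i = b
    · subst hi
      have h := hcol' j
      rw [hbal, ← mul_pow, sq_eq_sq₀ (div_pos (hα i j) (hσ i j)).le (mul_pos (hρ i) (hw j)).le,
        div_eq_iff (hσ i j).ne'] at h
      rw [h, propAlloc]
      ring
    · exact hprop i hi j
  · rintro ⟨ρ, -, hbal, rfl⟩
    refine ⟨fun i _ j j' => ?_, fun j => ?_⟩
    · simp only [propAlloc, mul_div_assoc, div_self (mul_pos (hσ i j) (hw j)).ne',
        div_self (mul_pos (hσ i j') (hw j')).ne']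
    · simp only [hquot]
      rw [hsq, hbal, mul_pow]

end Conditions

theorem IsRateFunction_s1.existsUnique_balance_conditions {ι κ : Type*} [Fintype ι] [DecidableEq ι]
    [Fintype κ] [Nonempty κ] {σ : ι → κ → ℝ} {w : κ → ℝ} {δ : ι → ℝ} {b : ι}
    {G : ι → (ι → κ → ℝ) → ℝ} (hG : IsRateFunction_s1 (fun i j => σ i j * w j) δ b G)
    (hσ : ∀ i j, 0 < σ i j) (hw : ∀ j, 0 < w j) (hδ : ∀ i ≠ b, δ i ≠ 0) (hb : ∃ i, i ≠ b)
    {ρ : ι → ℝ} {γ : ℝ} (hρ : ∀ i, 0 < ρ i) (hbal : ∑ i ∈ univ.erase b, ρ i ^ 2 = ρ b ^ 2)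
    (hsum : ∑ i, ∑ j, propAlloc (fun i j => σ i j * w j) ρ i j = 1)
    (hγ : ∀ i ≠ b, G i (propAlloc (fun i j => σ i j * w j) ρ) = γ) :
    ∃! α : ι → κ → ℝ, (∀ i j, 0 < α i j) ∧ (∑ i, ∑ j, α i j = 1) ∧
      (∀ i, i ≠ b → ∀ j j' : κ, α i j / (σ i j * w j) = α i j' / (σ i j' * w j')) ∧
      (∀ j, (α b j / σ b j) ^ 2 = ∑ i ∈ univ.erase b, (α i j / σ i j) ^ 2) ∧
      (∀ i i' : ι, i ≠ b → i' ≠ b → i ≠ i' → G i α = G i' α) := by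
  obtain ⟨j₀⟩ := ‹Nonempty κ›
  have hc : ∀ i j, 0 < σ i j * w j := fun i j => mul_pos (hσ i j) (hw j)
  refine ⟨propAlloc _ ρ, ⟨propAlloc_pos hc hρ, hsum, ?_⟩, ?_⟩
  · obtain ⟨hrow, hcol⟩ :=
      (balance_conditions_iff hσ hw j₀ (propAlloc_pos hc hρ)).2 ⟨ρ, hρ, hbal, rfl⟩
    exact ⟨hrow, hcol, fun i i' hi hi' _ => (hγ i hi).trans (hγ i' hi').symm⟩
  · rintro α ⟨hα, hα1, hrow, hcol, hrate⟩
    obtain ⟨ρ', hρ', hbal', rfl⟩ := (balance_conditions_iff hσ hw j₀ hα).1 ⟨hrow, hcol⟩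
    obtain ⟨i₁, hi₁⟩ := hb
    have hγ' : ∀ i ≠ b, G i (propAlloc _ ρ') = G i₁ (propAlloc (fun i j => σ i j * w j) ρ') :=
      fun i hi => by
        by_cases h : i = i₁
        · rw [h]
        · exact hrate i i₁ hi hi₁ h
    exact (hG.propAlloc_eq_of_forall_rate_eq hc hδ ⟨i₁, hi₁⟩ hρ hρ' hbal hbal'
      (hsum.trans hα1.symm) hγ hγ').symm

theorem stmt_1_general
    {K D : ℕ} (hK : 2 ≤ K) (hD : 1 ≤ D)
    (b : Fin K)
    (σ : Fin K → Fin D → ℝ) (hσ : ∀ i j, 0 < σ i j)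
    (w : Fin D → ℝ) (hw : ∀ j, 0 < w j)
    (μbar : Fin K → ℝ)
    (hbest : ∀ i, i ≠ b → μbar i < μbar b)
    (G : Fin K → (Fin K → Fin D → ℝ) → ℝ)
    (hGpos : ∀ i α, (∀ j, 0 < α b j) → (∀ j, 0 < α i j) →
      G i α = (μbar b - μbar i) ^ 2 /
        (2 * (∑ j, (σ b j) ^ 2 * (w j) ^ 2 / α b j
            + ∑ j, (σ i j) ^ 2 * (w j) ^ 2 / α i j)))
    (hGzero : ∀ i α, (∃ j, α b j = 0 ∨ α i j = 0) → G i α = 0) :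
    (∃! α : Fin K → Fin D → ℝ,
      (∀ i j, 0 ≤ α i j) ∧ (∑ i, ∑ j, α i j = 1) ∧
      (∀ α' : Fin K → Fin D → ℝ, (∀ i j, 0 ≤ α' i j) → ∑ i, ∑ j, α' i j = 1 →
        (⨅ i : {i : Fin K // i ≠ b}, G i.1 α') ≤ ⨅ i : {i : Fin K // i ≠ b}, G i.1 α))
    ∧
    (∃! α : Fin K → Fin D → ℝ,
      (∀ i j, 0 < α i j) ∧ (∑ i, ∑ j, α i j = 1) ∧
      (∀ i, i ≠ b → ∀ j j' : Fin D,
        α i j / (σ i j * w j) = α i j' / (σ i j' * w j')) ∧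
      (∀ j, (α b j / σ b j) ^ 2 = ∑ i ∈ univ.erase b, (α i j / σ i j) ^ 2) ∧
      (∀ i i' : Fin K, i ≠ b → i' ≠ b → i ≠ i' → G i α = G i' α)) := by
  have : Nonempty (Fin D) := ⟨⟨0, hD⟩⟩
  set c : Fin K → Fin D → ℝ := fun i j => σ i j * w j
  have hc : ∀ i j, 0 < c i j := fun i j => mul_pos (hσ i j) (hw j)
  have hG : IsRateFunction_s1 c (fun i => μbar b - μbar i) b G :=
    ⟨fun i α hαb hαi => by simp only [hGpos i α hαb hαi, designVariance, c, mul_pow], hGzero⟩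
  have hb : ∃ i, i ≠ b := Fintype.exists_ne_of_one_lt_card (by rw [Fintype.card_fin]; omega) b
  have hδ : ∀ i ≠ b, μbar b - μbar i ≠ 0 := fun i hi => (sub_pos.2 (hbest i hi)).ne'
  obtain ⟨ρ, t, hρ, hsum, hbal, hrate⟩ := exists_balanced_weights
    (fun i => sum_pos (fun j _ => hc i j) univ_nonempty)
    (fun i hi => pow_pos (sub_pos.2 (hbest i hi)) 2) hb
  have hsum' : ∑ i, ∑ j, propAlloc c ρ i j = 1 := by simpa only [propAlloc, ← mul_sum] using hsum
  have hγ : ∀ i ≠ b, G i (propAlloc c ρ) = 1 / (2 * t) := fun i hi => by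
    rw [hG.eq_of_pos i _ (propAlloc_pos hc hρ b) (propAlloc_pos hc hρ i),
      designVariance_propAlloc (fun j => (hc b j).ne') (hρ b).ne',
      designVariance_propAlloc (fun j => (hc i j).ne') (hρ i).ne', hrate i hi]
    field_simp [hδ i hi]
  exact ⟨hG.existsUnique_isMax_iInf hc hδ hb hρ hbal hsum' hγ,
    hG.existsUnique_balance_conditions hσ hw hδ hb hρ hbal hsum' hγ⟩

/-- The rate-maximization problem has a unique optimal allocation; equivalently there is
exactly one strictly positive feasible allocation satisfying the three balance conditions. -/
theorem stmt_1
    {K D : ℕ} (hK : 2 ≤ K) (hD : 1 ≤ D)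
    (b : Fin K)
    (μ : Fin K → Fin D → ℝ)
    (σ : Fin K → Fin D → ℝ) (hσ : ∀ i j, 0 < σ i j)
    (w : Fin D → ℝ) (hw : ∀ j, 0 < w j) (hw1 : ∑ j, w j = 1)
    (μbar : Fin K → ℝ) (hμbar : ∀ i, μbar i = ∑ j, w j * μ i j)
    (hbest : ∀ i, i ≠ b → μbar i < μbar b)
    (G : Fin K → (Fin K → Fin D → ℝ) → ℝ)
    (hGpos : ∀ i α, (∀ j, 0 < α b j) → (∀ j, 0 < α i j) →
      G i α = (μbar b - μbar i) ^ 2 /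
        (2 * (∑ j, (σ b j) ^ 2 * (w j) ^ 2 / α b j
            + ∑ j, (σ i j) ^ 2 * (w j) ^ 2 / α i j)))
    (hGzero : ∀ i α, (∃ j, α b j = 0 ∨ α i j = 0) → G i α = 0) :
    (∃! α : Fin K → Fin D → ℝ,
      (∀ i j, 0 ≤ α i j) ∧ (∑ i, ∑ j, α i j = 1) ∧
      (∀ α' : Fin K → Fin D → ℝ, (∀ i j, 0 ≤ α' i j) → ∑ i, ∑ j, α' i j = 1 →
        (⨅ i : {i : Fin K // i ≠ b}, G i.1 α') ≤ ⨅ i : {i : Fin K // i ≠ b}, G i.1 α))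
    ∧
    (∃! α : Fin K → Fin D → ℝ,
      (∀ i j, 0 < α i j) ∧ (∑ i, ∑ j, α i j = 1) ∧
      (∀ i, i ≠ b → ∀ j j' : Fin D,
        α i j / (σ i j * w j) = α i j' / (σ i j' * w j')) ∧
      (∀ j, (α b j / σ b j) ^ 2 = ∑ i ∈ univ.erase b, (α i j / σ i j) ^ 2) ∧
      (∀ i i' : Fin K, i ≠ b → i' ≠ b → i ≠ i' → G i α = G i' α)) :=
  stmt_1_general hK hD b σ hσ w hw μbar hbest G hGpos hGzero
end

section
/- For every fixed i ≠ b, the function (α_b, α_i) ↦ G_i(α_b, α_i) is concave on the open positive orthant {(α_b, α_i) ∈ ℝ^D × ℝ^D : all coordinates strictly positive}. -/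
/-! The rate function is a nonnegative multiple of `x ↦ (∑ₖ cₖ / xₖ)⁻¹`, evaluated at
the concatenation of `α_b` and `α_i`. That function is concave on the positive orthant:
by the Cauchy–Schwarz inequality in Engel form, `(∑ₖ cₖ / xₖ)⁻¹ ≤ ∑ₖ tₖ² xₖ / cₖ` for
every `t` with `∑ₖ tₖ = 1`, with equality at `tₖ ∝ cₖ / xₖ`, so it is an infimum of
linear functions of `x`. -/

open Finset

theorem convex_pos_orthant {ι : Type*} : Convex ℝ {x : ι → ℝ | ∀ k, 0 < x k} :=
  fun _ hx _ hy _ _ ha hb hab k => convex_Ioi (0 : ℝ) (hx k) (hy k) ha hb hab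

section HarmonicSum

variable {ι : Type*} [Fintype ι] {c : ι → ℝ}

theorem inv_sum_div_le_sum_sq_mul_div (hc : ∀ k, 0 < c k) {x : ι → ℝ} (hx : ∀ k, 0 < x k)
    {t : ι → ℝ} (ht : ∑ k, t k = 1) :
    (∑ k, c k / x k)⁻¹ ≤ ∑ k, t k ^ 2 * x k / c k := by
  have h := sq_sum_div_le_sum_sq_div univ t (g := fun k => c k / x k)
    fun k _ => div_pos (hc k) (hx k)
  simpa only [ht, one_pow, one_div, div_div_eq_mul_div] using h

theorem sum_sq_mul_div_eq_inv_sum_div (hc : ∀ k, 0 < c k) {x : ι → ℝ} (hx : ∀ k, 0 < x k)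
    (hS : 0 < ∑ k, c k / x k) :
    ∑ k, (c k / x k / ∑ l, c l / x l) ^ 2 * x k / c k = (∑ k, c k / x k)⁻¹ := by
  set S := ∑ l, c l / x l with hSdef
  have hterm : ∀ k, (c k / x k / S) ^ 2 * x k / c k = c k / x k / S ^ 2 := by
    intro k
    have := (hx k).ne'
    have := (hc k).ne'
    field_simp
  rw [sum_congr rfl fun k _ => hterm k, ← sum_div, ← hSdef, sq, div_mul_cancel_left₀ hS.ne']

theorem concaveOn_inv_sum_div (hc : ∀ k, 0 < c k) :
    ConcaveOn ℝ {x : ι → ℝ | ∀ k, 0 < x k} (fun x => (∑ k, c k / x k)⁻¹) := by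
  rcases isEmpty_or_nonempty ι with _ | _
  · simpa using concaveOn_const (0 : ℝ) (convex_pos_orthant (ι := ι))
  refine ⟨convex_pos_orthant, fun x hx y hy a b ha hb hab => ?_⟩
  set z := a • x + b • y
  have hz : ∀ k, 0 < z k := convex_pos_orthant hx hy ha hb hab
  have hS : 0 < ∑ k, c k / z k := sum_pos (fun k _ => div_pos (hc k) (hz k)) univ_nonempty
  set t := fun k => c k / z k / ∑ l, c l / z l
  have ht : ∑ k, t k = 1 := by rw [← sum_div, div_self hS.ne']
  calc a • (∑ k, c k / x k)⁻¹ + b • (∑ k, c k / y k)⁻¹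
      ≤ a * ∑ k, t k ^ 2 * x k / c k + b * ∑ k, t k ^ 2 * y k / c k := by
        simp only [smul_eq_mul]
        gcongr
        exacts [inv_sum_div_le_sum_sq_mul_div hc hx ht, inv_sum_div_le_sum_sq_mul_div hc hy ht]
    _ = ∑ k, t k ^ 2 * z k / c k := by
        simp only [mul_sum, ← sum_add_distrib, z, Pi.add_apply, Pi.smul_apply, smul_eq_mul]
        exact sum_congr rfl fun k _ => by ring
    _ = (∑ k, c k / z k)⁻¹ := sum_sq_mul_div_eq_inv_sum_div hc hz hS

end HarmonicSum

theorem stmt_3_general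
    {K D : ℕ}
    (b : Fin K)
    (σ : Fin K → Fin D → ℝ) (hσ : ∀ i j, 0 < σ i j)
    (w : Fin D → ℝ) (hw : ∀ j, 0 < w j)
    (μbar : Fin K → ℝ)
    (G : Fin K → (Fin D → ℝ) → (Fin D → ℝ) → ℝ)
    (hG : ∀ i ab ai, G i ab ai = (μbar b - μbar i) ^ 2 /
        (2 * (∑ j, (σ b j) ^ 2 * (w j) ^ 2 / ab j
            + ∑ j, (σ i j) ^ 2 * (w j) ^ 2 / ai j)))
    (i : Fin K) :
    ConcaveOn ℝ
      {p : (Fin D → ℝ) × (Fin D → ℝ) | (∀ j, 0 < p.1 j) ∧ (∀ j, 0 < p.2 j)}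
      (fun p => G i p.1 p.2) := by
  let c : Fin D ⊕ Fin D → ℝ :=
    Sum.elim (fun j => σ b j ^ 2 * w j ^ 2) (fun j => σ i j ^ 2 * w j ^ 2)
  have hc : ∀ k, 0 < c k := by
    rintro (j | j) <;> exact mul_pos (pow_pos (hσ _ j) 2) (pow_pos (hw j) 2)
  let concat := (LinearEquiv.sumArrowLequivProdArrow (Fin D) (Fin D) ℝ ℝ).symm.toLinearMap
  have hconcave := ((concaveOn_inv_sum_div hc).comp_linearMap concat).smul
    (div_nonneg (sq_nonneg (μbar b - μbar i)) zero_le_two)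
  have hset : concat ⁻¹' {x | ∀ k, 0 < x k} =
      {p : (Fin D → ℝ) × (Fin D → ℝ) | (∀ j, 0 < p.1 j) ∧ (∀ j, 0 < p.2 j)} := by
    ext ⟨α_b, α_i⟩
    simp [concat, Sum.forall]
  rw [hset] at hconcave
  refine hconcave.congr fun ⟨α_b, α_i⟩ _ => ?_
  simp only [concat, c, hG, Function.comp_apply, LinearEquiv.coe_coe, Fintype.sum_sum_type,
    LinearEquiv.sumArrowLequivProdArrow_symm_apply_inl,
    LinearEquiv.sumArrowLequivProdArrow_symm_apply_inr, Sum.elim_inl, Sum.elim_inr, smul_eq_mul]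
  rw [← div_eq_mul_inv, div_div]

/-- Concavity of the rate function on the open positive orthant. -/
theorem stmt_3
    {K D : ℕ} (hK : 2 ≤ K) (hD : 1 ≤ D)
    (b : Fin K)
    (μ : Fin K → Fin D → ℝ)
    (σ : Fin K → Fin D → ℝ) (hσ : ∀ i j, 0 < σ i j)
    (w : Fin D → ℝ) (hw : ∀ j, 0 < w j) (hw1 : ∑ j, w j = 1)
    (μbar : Fin K → ℝ) (hμbar : ∀ i, μbar i = ∑ j, w j * μ i j)
    (hbest : ∀ i, i ≠ b → μbar i < μbar b)
    (G : Fin K → (Fin D → ℝ) → (Fin D → ℝ) → ℝ)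
    (hG : ∀ i ab ai, G i ab ai = (μbar b - μbar i) ^ 2 /
        (2 * (∑ j, (σ b j) ^ 2 * (w j) ^ 2 / ab j
            + ∑ j, (σ i j) ^ 2 * (w j) ^ 2 / ai j)))
    (i : Fin K) (hi : i ≠ b) :
    ConcaveOn ℝ
      {p : (Fin D → ℝ) × (Fin D → ℝ) | (∀ j, 0 < p.1 j) ∧ (∀ j, 0 < p.2 j)}
      (fun p => G i p.1 p.2) :=
  stmt_3_general b σ hσ w hw μbar G hG i
end

section
/- Let m > 0 and v > 0. For each n ≥ 1 let W_n be a real random variable with Gaussian distribution N(m, v/n). Then lim_{n→∞} (1/n) log P(W_n ≤ 0) = −m²/(2v). -/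
/-!
Write `s = v / n` for the variance of `W n`. The Chernoff bound, with the Gaussian cumulant
generating function `t ↦ m t + s t² / 2` evaluated at `t = -m / s`, gives
`P(W n ≤ 0) ≤ exp (-m² / (2 s))`. Conversely, on the window `[-√s, 0]` the density is at least
`exp (-(m + √s)² / (2 s)) / √(2 π s)`, and the window has length `√s`, so
`P(W n ≤ 0) ≥ exp (-(m + √s)² / (2 s)) / √(2 π)` with a prefactor independent of `n`.
Multiplying the logarithms by `1 / n = s / v`, both bounds tend to `-m² / (2 v)`.
-/

open MeasureTheory ProbabilityTheory Filter Real Set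
open scoped NNReal Topology

namespace ProbabilityTheory

lemma gaussianReal_real_Iic_le_exp {m a : ℝ} (ha : a ≤ m) {s : ℝ≥0} (hs : s ≠ 0) :
    (gaussianReal m s).real (Iic a) ≤ exp (-((m - a) ^ 2 / (2 * s))) := by
  have hchernoff := measure_le_le_exp_cgf (X := id) (μ := gaussianReal m s) a
    (t := -(m - a) / s) (div_nonpos_of_nonpos_of_nonneg (by linarith) s.2)
    (integrable_exp_mul_gaussianReal _)
  rw [cgf_gaussianReal Measure.map_id] at hchernoff
  convert hchernoff using 2
  · rfl
  · field_simp
    ring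

lemma exp_div_sqrt_le_gaussianReal_real_Iic {m a : ℝ} (ha : a ≤ m) {s : ℝ≥0} (hs : s ≠ 0) :
    exp (-((m - a + √s) ^ 2 / (2 * s))) / √(2 * π) ≤ (gaussianReal m s).real (Iic a) := by
  have hs' : (0 : ℝ) < s := by positivity
  have hpdf : ∀ x ∈ Icc (a - √s) a,
      exp (-((m - a + √s) ^ 2 / (2 * s))) / √(2 * π * s) ≤ gaussianPDFReal m s x := by
    intro x hx
    rw [gaussianPDFReal, div_eq_inv_mul, neg_div, sub_sq_comm]
    gcongr
    · linarith [hx.2]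
    · linarith [hx.1]
  calc exp (-((m - a + √s) ^ 2 / (2 * s))) / √(2 * π)
      = ∫ _ in Icc (a - √s) a, exp (-((m - a + √s) ^ 2 / (2 * s))) / √(2 * π * s) := by
        rw [setIntegral_const, Real.volume_real_Icc_of_le (by simp), smul_eq_mul,
          Real.sqrt_mul' _ hs'.le, sub_sub_cancel]
        field_simp
    _ ≤ ∫ x in Icc (a - √s) a, gaussianPDFReal m s x :=
        setIntegral_mono_on (integrableOn_const (by simp))
          (integrable_gaussianPDFReal m s).integrableOn measurableSet_Icc hpdf
    _ ≤ ∫ x in Iic a, gaussianPDFReal m s x :=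
        setIntegral_mono_set (integrable_gaussianPDFReal m s).integrableOn
          (.of_forall fun x => gaussianPDFReal_nonneg m s x) Icc_subset_Iic_self.eventuallyLE
    _ = (gaussianReal m s).real (Iic a) := by
        rw [measureReal_def, gaussianReal_apply_eq_integral m hs,
          ENNReal.toReal_ofReal (integral_nonneg fun x => gaussianPDFReal_nonneg m s x)]

lemma tendsto_inv_mul_log_gaussianReal_real_Iic {m a : ℝ} (ha : a ≤ m) {v : ℝ≥0} (hv : v ≠ 0) :
    Tendsto (fun n : ℕ => (n : ℝ)⁻¹ * log ((gaussianReal m (v / n)).real (Iic a))) atTop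
      (𝓝 (-((m - a) ^ 2 / (2 * v)))) := by
  have hs : ∀ᶠ n : ℕ in atTop, v / (n : ℝ≥0) ≠ 0 := by
    filter_upwards [eventually_ne_atTop 0] with n hn
    exact div_ne_zero hv (by exact_mod_cast hn)
  have hlow : ∀ᶠ n : ℕ in atTop,
      -((m - a + √(v / n)) ^ 2 / (2 * v)) - (n : ℝ)⁻¹ * log √(2 * π) ≤
        (n : ℝ)⁻¹ * log ((gaussianReal m (v / n)).real (Iic a)) := by
    filter_upwards [hs, eventually_ne_atTop 0] with n hsn hn
    have hbound := exp_div_sqrt_le_gaussianReal_real_Iic ha hsn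
    push_cast at hbound
    calc -((m - a + √(v / n)) ^ 2 / (2 * v)) - (n : ℝ)⁻¹ * log √(2 * π)
        = (n : ℝ)⁻¹ * log (exp (-((m - a + √(v / n)) ^ 2 / (2 * (v / n)))) / √(2 * π)) := by
          rw [log_div (exp_ne_zero _) (by positivity), log_exp]
          field_simp
      _ ≤ _ := by gcongr
  have hup : ∀ᶠ n : ℕ in atTop,
      (n : ℝ)⁻¹ * log ((gaussianReal m (v / n)).real (Iic a)) ≤ -((m - a) ^ 2 / (2 * v)) := by
    filter_upwards [hs, eventually_ne_atTop 0] with n hsn hn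
    have hbound := gaussianReal_real_Iic_le_exp ha hsn
    have hpos := (div_pos (exp_pos _) (by positivity)).trans_le
      (exp_div_sqrt_le_gaussianReal_real_Iic ha hsn)
    push_cast at hbound
    calc (n : ℝ)⁻¹ * log ((gaussianReal m (v / n)).real (Iic a))
        ≤ (n : ℝ)⁻¹ * log (exp (-((m - a) ^ 2 / (2 * (v / n))))) := by gcongr
      _ = -((m - a) ^ 2 / (2 * v)) := by
          rw [log_exp]
          field_simp
  have hlim : Tendsto
      (fun n : ℕ => -((m - a + √(v / n)) ^ 2 / (2 * v)) - (n : ℝ)⁻¹ * log √(2 * π))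
      atTop (𝓝 (-((m - a) ^ 2 / (2 * v)))) := by
    have hsqrt : Tendsto (fun n : ℕ => √(v / n)) atTop (𝓝 0) := by
      simpa only [sqrt_zero] using (tendsto_const_div_atTop_nhds_zero_nat (v : ℝ)).sqrt
    simpa using (((tendsto_const_nhds.add hsqrt).pow 2).div_const (2 * (v : ℝ))).neg.sub
      (tendsto_inv_atTop_nhds_zero_nat.mul_const (log √(2 * π)))
  exact tendsto_of_tendsto_of_tendsto_of_le_of_le' hlim tendsto_const_nhds hlow hup

end ProbabilityTheory

/-- If `W n` is Gaussian with mean `m > 0` and variance `v / n`, then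
`(1/n) log P(W n ≤ 0) → -m²/(2v)`. -/
theorem stmt_5
    {Ω : Type*} [MeasurableSpace Ω] (P : Measure Ω) [IsProbabilityMeasure P]
    (m : ℝ) (hm : 0 < m) (v : NNReal) (hv : 0 < v)
    (W : ℕ → Ω → ℝ)
    (hdist : ∀ n : ℕ, 1 ≤ n → Measure.map (W n) P = gaussianReal m (v / n)) :
    Tendsto (fun n : ℕ => (n : ℝ)⁻¹ * Real.log (P {ω | W n ω ≤ 0}).toReal)
      atTop (nhds (-(m ^ 2 / (2 * (v : ℝ))))) := by
  have hlaw : ∀ᶠ n : ℕ in atTop,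
      (gaussianReal m (v / n)).real (Iic 0) = (P {ω | W n ω ≤ 0}).toReal := by
    filter_upwards [eventually_ge_atTop 1] with n hn
    have hW : AEMeasurable (W n) P :=
      .of_map_ne_zero (hdist n hn ▸ IsProbabilityMeasure.ne_zero _)
    rw [← hdist n hn, measureReal_def, Measure.map_apply_of_aemeasurable hW measurableSet_Iic]
    rfl
  have hlim := tendsto_inv_mul_log_gaussianReal_real_Iic hm.le hv.ne'
  rw [sub_zero] at hlim
  exact hlim.congr' (hlaw.mono fun n hn => by rw [hn])
end

section
/- Let s_b > 0, s_i > 0 and μ_i < μ_b be real numbers, and define I(x_b, x_i) = (x_b − μ_b)²/(2 s_b) + (x_i − μ_i)²/(2 s_i). Then inf over all pairs (x_b, x_i) ∈ ℝ² with x_b ≤ x_i of I(x_b, x_i) equals inf over x ∈ [μ_i, μ_b] of I(x, x), and both infima equal (μ_b − μ_i)² / (2 (s_b + s_i)). -/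
/-!
Writing `u = μ_b - x_b` and `v = x_i - μ_i`, the constraint `x_b ≤ x_i` says
`u + v ≥ μ_b - μ_i > 0`, so Sedrakyan's form of Cauchy–Schwarz,
`(u + v)² / (2 s_b + 2 s_i) ≤ u² / (2 s_b) + v² / (2 s_i)`, bounds `I` below by
`(μ_b - μ_i)² / (2 (s_b + s_i))`. Equality holds on the diagonal at the weighted mean
`x = (s_i μ_b + s_b μ_i) / (s_b + s_i)`, which lies in `[μ_i, μ_b]`.
-/

open Set

theorem sq_add_div_add_le {u v a b : ℝ} (ha : 0 < a) (hb : 0 < b) :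
    (u + v) ^ 2 / (a + b) ≤ u ^ 2 / a + v ^ 2 / b := by
  simpa [Fin.sum_univ_two] using
    Finset.sq_sum_div_le_sum_sq_div Finset.univ ![u, v] (g := ![a, b])
      (by simp [Fin.forall_fin_two, ha, hb])

theorem ciInf_eq_of_forall_le_of_eq {ι α : Type*} [ConditionallyCompleteLattice α]
    {f : ι → α} {c : α} (hle : ∀ i, c ≤ f i) (i₀ : ι) (h₀ : f i₀ = c) :
    ⨅ i, f i = c :=
  IsLeast.csInf_eq ⟨⟨i₀, h₀⟩, forall_mem_range.2 hle⟩

section GaussianRate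

variable {sb si μb μi : ℝ}

theorem gaussianRate_ge_of_le (hsb : 0 < sb) (hsi : 0 < si) (hμ : μi ≤ μb) {xb xi : ℝ}
    (hx : xb ≤ xi) :
    (μb - μi) ^ 2 / (2 * (sb + si)) ≤
      (xb - μb) ^ 2 / (2 * sb) + (xi - μi) ^ 2 / (2 * si) := by
  have hgap : (μb - μi) ^ 2 ≤ ((μb - xb) + (xi - μi)) ^ 2 := by
    gcongr; linarith
  calc (μb - μi) ^ 2 / (2 * (sb + si))
      ≤ ((μb - xb) + (xi - μi)) ^ 2 / (2 * sb + 2 * si) := by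
        rw [mul_add]; gcongr
    _ ≤ (μb - xb) ^ 2 / (2 * sb) + (xi - μi) ^ 2 / (2 * si) :=
        sq_add_div_add_le (by positivity) (by positivity)
    _ = (xb - μb) ^ 2 / (2 * sb) + (xi - μi) ^ 2 / (2 * si) := by rw [sub_sq_comm μb xb]

theorem weightedMean_mem_Icc (hsb : 0 < sb) (hsi : 0 < si) (hμ : μi ≤ μb) :
    (si * μb + sb * μi) / (sb + si) ∈ Icc μi μb := by
  have hs : 0 < sb + si := add_pos hsb hsi
  constructor
  · rw [le_div_iff₀ hs]; nlinarith
  · rw [div_le_iff₀ hs]; nlinarith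

theorem gaussianRate_weightedMean (hsb : 0 < sb) (hsi : 0 < si) :
    let x := (si * μb + sb * μi) / (sb + si)
    (x - μb) ^ 2 / (2 * sb) + (x - μi) ^ 2 / (2 * si) = (μb - μi) ^ 2 / (2 * (sb + si)) := by
  have hs : sb + si ≠ 0 := (add_pos hsb hsi).ne'
  field_simp
  ring

end GaussianRate

/-- The infimum of the two-dimensional Gaussian rate function over `{x_b ≤ x_i}` equals
the infimum of its diagonal restriction over `[μ_i, μ_b]`, and both equal
`(μ_b − μ_i)² / (2(s_b + s_i))`. -/
theorem stmt_7
    (sb si μi μb : ℝ) (hsb : 0 < sb) (hsi : 0 < si) (h : μi < μb)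
    (I : ℝ → ℝ → ℝ)
    (hI : ∀ xb xi, I xb xi = (xb - μb) ^ 2 / (2 * sb) + (xi - μi) ^ 2 / (2 * si)) :
    (⨅ p : {p : ℝ × ℝ // p.1 ≤ p.2}, I p.1.1 p.1.2)
        = (⨅ x : Set.Icc μi μb, I (x : ℝ) (x : ℝ))
      ∧ (⨅ p : {p : ℝ × ℝ // p.1 ≤ p.2}, I p.1.1 p.1.2)
        = (μb - μi) ^ 2 / (2 * (sb + si)) := by
  set x := (si * μb + sb * μi) / (sb + si)
  have hbound : ∀ xb xi, xb ≤ xi → (μb - μi) ^ 2 / (2 * (sb + si)) ≤ I xb xi :=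
    fun xb xi hx => (hI xb xi).symm ▸ gaussianRate_ge_of_le hsb hsi h.le hx
  have hmin : I x x = (μb - μi) ^ 2 / (2 * (sb + si)) :=
    (hI x x).trans (gaussianRate_weightedMean hsb hsi)
  have hpairs := ciInf_eq_of_forall_le_of_eq
    (f := fun p : {p : ℝ × ℝ // p.1 ≤ p.2} => I p.1.1 p.1.2)
    (fun p => hbound _ _ p.2) ⟨(x, x), le_rfl⟩ hmin
  have hdiag := ciInf_eq_of_forall_le_of_eq (f := fun x : Icc μi μb => I x x)
    (fun y => hbound y y le_rfl) ⟨x, weightedMean_mem_Icc hsb hsi h.le⟩ hmin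
  exact ⟨hpairs.trans hdiag.symm, hpairs⟩
end

section
/- Let n ≥ 1 and let a_1, …, a_n be strictly positive real numbers. Then the function f(x) = 1 / (Σ_{i=1}^n a_i / x_i) is concave on the open positive orthant {x ∈ ℝⁿ : x_i > 0 for all i}. -/
open Finset

lemma cs_key {n : ℕ} (a : Fin n → ℝ) (ha : ∀ i, 0 < a i)
    (l x : Fin n → ℝ) (hx : ∀ i, 0 < x i) (hsum : ∑ i, l i = 1) :
    1 / ∑ i, a i / x i ≤ ∑ i, (l i) ^ 2 * x i / a i := by
  have hS : 0 < ∑ i, a i / x i := by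
    have : Nonempty (Fin n) := by
      by_contra h
      simp [not_nonempty_iff.mp h] at hsum
    exact Finset.sum_pos (fun i _ => div_pos (ha i) (hx i)) univ_nonempty
  have cs := Finset.sum_mul_sq_le_sq_mul_sq univ
    (fun i => Real.sqrt (a i / x i)) (fun i => l i * Real.sqrt (x i / a i))
  have h1 : ∀ i : Fin n, Real.sqrt (a i / x i) * (l i * Real.sqrt (x i / a i)) = l i := by
    intro i
    rw [mul_comm (l i), ← mul_assoc, ← Real.sqrt_mul (le_of_lt (div_pos (ha i) (hx i)))]
    have : a i / x i * (x i / a i) = 1 := by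
      rw [div_mul_div_comm, mul_comm (x i) (a i), div_self (mul_pos (ha i) (hx i)).ne']
    rw [this, Real.sqrt_one, one_mul]
  have h2 : ∀ i : Fin n, Real.sqrt (a i / x i) ^ 2 = a i / x i := fun i =>
    Real.sq_sqrt (le_of_lt (div_pos (ha i) (hx i)))
  have h3 : ∀ i : Fin n, (l i * Real.sqrt (x i / a i)) ^ 2 = l i ^ 2 * x i / a i := by
    intro i
    rw [mul_pow, Real.sq_sqrt (le_of_lt (div_pos (hx i) (ha i))), mul_div_assoc]
  simp only [h1, h2, h3, hsum, one_pow] at cs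
  rw [div_le_iff₀ hS, mul_comm]
  exact cs

/-- The function `x ↦ 1 / (Σ_i a_i / x_i)` is concave on the open positive orthant. -/
theorem stmt_8
    {n : ℕ} (hn : 1 ≤ n) (a : Fin n → ℝ) (ha : ∀ i, 0 < a i) :
    ConcaveOn ℝ {x : Fin n → ℝ | ∀ i, 0 < x i} (fun x => 1 / ∑ i, a i / x i) := by
  have hne : Nonempty (Fin n) := ⟨⟨0, hn⟩⟩
  constructor
  · have : {x : Fin n → ℝ | ∀ i, 0 < x i} = Set.pi Set.univ (fun _ => Set.Ioi (0:ℝ)) := by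
      ext x; simp [Set.mem_pi]
    rw [this]
    exact convex_pi fun i _ => convex_Ioi 0
  · intro x hx y hy s t hs ht hst
    simp only [Set.mem_setOf_eq] at hx hy
    set z : Fin n → ℝ := s • x + t • y with hzdef
    have hz : ∀ i, 0 < z i := by
      intro i
      rcases eq_or_lt_of_le hs with h | h
      · have ht1 : t = 1 := by linarith
        simp [hzdef, ← h, ht1, hy i]
      · have : z i = s * x i + t * y i := rfl
        rw [this]
        have := mul_nonneg ht (le_of_lt (hy i))
        nlinarith [hx i, mul_pos h (hx i)]
    have hS : 0 < ∑ i, a i / z i :=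
      Finset.sum_pos (fun i _ => div_pos (ha i) (hz i)) univ_nonempty
    set l : Fin n → ℝ := fun i => (a i / z i) / (∑ j, a j / z j) with hldef
    have hlsum : ∑ i, l i = 1 := by
      rw [hldef]
      simp only
      rw [← Finset.sum_div, div_self (ne_of_gt hS)]
    have hfz : (1 / ∑ i, a i / z i) = ∑ i, (l i) ^ 2 * z i / a i := by
      rw [eq_comm]
      have : ∀ i : Fin n, (l i) ^ 2 * z i / a i = (a i / z i) / (∑ j, a j / z j) ^ 2 := by
        intro i
        rw [hldef]
        simp only
        rw [div_pow]
        have h1 : z i ≠ 0 := (hz i).ne'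
        have h2 : a i ≠ 0 := (ha i).ne'
        have h3 : (∑ j, a j / z j) ≠ 0 := hS.ne'
        field_simp
      rw [Finset.sum_congr rfl (fun i _ => this i), ← Finset.sum_div, sq]
      rw [div_mul_eq_div_div, div_self (ne_of_gt hS)]
    have hsplit : ∑ i, (l i) ^ 2 * z i / a i
        = s * ∑ i, (l i) ^ 2 * x i / a i + t * ∑ i, (l i) ^ 2 * y i / a i := by
      rw [Finset.mul_sum, Finset.mul_sum, ← Finset.sum_add_distrib]
      refine Finset.sum_congr rfl fun i _ => ?_
      have : z i = s * x i + t * y i := rfl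
      rw [this]
      field_simp
    have hkx := cs_key a ha l x hx hlsum
    have hky := cs_key a ha l y hy hlsum
    calc s • (1 / ∑ i, a i / x i) + t • (1 / ∑ i, a i / y i)
        ≤ s * ∑ i, (l i) ^ 2 * x i / a i + t * ∑ i, (l i) ^ 2 * y i / a i := by
          simp only [smul_eq_mul]
          gcongr
      _ = 1 / ∑ i, a i / z i := by rw [hfz, hsplit]
end

section
/- Fix i ≠ b and vectors α_b, α_i ∈ ℝ^D with strictly positive entries. For any 1 ≤ j < j' ≤ D, the partial derivatives satisfy ∂G_i/∂α_{i,j}(α_b, α_i) = ∂G_i/∂α_{i,j'}(α_b, α_i) if and only if α_{i,j}/(σ_{i,j} w_j) = α_{i,j'}/(σ_{i,j'} w_{j'}). -/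
lemma e_aux (C q a x : ℝ) (ha : a ≠ 0) (hq : q ≠ 0) :
    C * x ^ 2 / (2 * a ^ 2 * q) = C / (2 * q) * (x / a) ^ 2 := by
  rw [div_pow, div_mul_div_comm]
  congr 1
  ring

lemma sq_iff_of_pos (x y : ℝ) (hx : 0 < x) (hy : 0 < y) : x ^ 2 = y ^ 2 ↔ x = y := by
  constructor
  · intro h
    rcases sq_eq_sq_iff_eq_or_eq_neg.mp h with h' | h'
    · exact h'
    · linarith
  · intro h; rw [h]

lemma deriv_key (C A c R t0 : ℝ) (ht0 : t0 ≠ 0) (hd : A + (c / t0 + R) ≠ 0) :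
    deriv (fun t => C / (2 * (A + (c / t + R)))) t0
      = C * c / (2 * t0 ^ 2 * (A + (c / t0 + R)) ^ 2) := by
  have h1 : HasDerivAt (fun t : ℝ => c / t) (-(c / t0 ^ 2)) t0 := by
    have := (hasDerivAt_inv ht0).const_mul c
    simpa [div_eq_mul_inv, mul_comm, neg_mul, mul_neg] using this
  have h2 : HasDerivAt (fun t => 2 * (A + (c / t + R))) (2 * (-(c / t0 ^ 2))) t0 :=
    ((h1.add_const R).const_add A).const_mul 2
  have hd2 : 2 * (A + (c / t0 + R)) ≠ 0 := by
    simpa using hd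
  have h3 : HasDerivAt (fun t => C * (2 * (A + (c / t + R)))⁻¹)
      (C * (-(2 * -(c / t0 ^ 2)) / (2 * (A + (c / t0 + R))) ^ 2)) t0 :=
    (h2.inv hd2).const_mul C
  have heq : (fun t : ℝ => C / (2 * (A + (c / t + R))))
      = fun t => C * (2 * (A + (c / t + R)))⁻¹ := by
    funext t; rw [div_eq_mul_inv]
  rw [heq, h3.deriv]
  generalize A + (c / t0 + R) = d at hd ⊢
  field_simp

/-- Equality of the partial derivatives of the rate function with respect to two
allocation coordinates of a non-best design is equivalent to the Input Balance
condition for those coordinates. -/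
theorem stmt_10
    {K D : ℕ} (hK : 2 ≤ K) (hD : 1 ≤ D)
    (b : Fin K)
    (μ : Fin K → Fin D → ℝ)
    (σ : Fin K → Fin D → ℝ) (hσ : ∀ i j, 0 < σ i j)
    (w : Fin D → ℝ) (hw : ∀ j, 0 < w j) (hw1 : ∑ j, w j = 1)
    (μbar : Fin K → ℝ) (hμbar : ∀ i, μbar i = ∑ j, w j * μ i j)
    (hbest : ∀ i, i ≠ b → μbar i < μbar b)
    (G : Fin K → (Fin D → ℝ) → (Fin D → ℝ) → ℝ)
    (hG : ∀ i ab ai, G i ab ai = (μbar b - μbar i) ^ 2 /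
        (2 * (∑ j, (σ b j) ^ 2 * (w j) ^ 2 / ab j
            + ∑ j, (σ i j) ^ 2 * (w j) ^ 2 / ai j)))
    (i : Fin K) (hi : i ≠ b)
    (ab ai : Fin D → ℝ) (hab : ∀ j, 0 < ab j) (hai : ∀ j, 0 < ai j)
    (j j' : Fin D) (hjj' : j < j') :
    (deriv (fun t => G i ab (Function.update ai j t)) (ai j)
        = deriv (fun t => G i ab (Function.update ai j' t)) (ai j'))
      ↔ ai j / (σ i j * w j) = ai j' / (σ i j' * w j') := by
  set C := (μbar b - μbar i) ^ 2 with hCdef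
  have hC : 0 < C := pow_pos (sub_pos.mpr (hbest i hi)) 2
  set A := ∑ k, (σ b k) ^ 2 * (w k) ^ 2 / ab k with hAdef
  set S := ∑ k, (σ i k) ^ 2 * (w k) ^ 2 / ai k with hSdef
  set c : Fin D → ℝ := fun k => (σ i k) ^ 2 * (w k) ^ 2 with hcdef
  have hcpos : ∀ k, 0 < c k := fun k =>
    mul_pos (pow_pos (hσ i k) 2) (pow_pos (hw k) 2)
  have hA : 0 < A := Finset.sum_pos
    (fun k _ => div_pos (mul_pos (pow_pos (hσ b k) 2) (pow_pos (hw k) 2)) (hab k))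
    ⟨j, Finset.mem_univ j⟩
  have hS : 0 < S := Finset.sum_pos
    (fun k _ => div_pos (hcpos k) (hai k)) ⟨j, Finset.mem_univ j⟩
  have hAS : 0 < A + S := add_pos hA hS
  have hd2 : 0 < (A + S) ^ 2 := pow_pos hAS 2
  -- derivative at a generic coordinate m
  have hderiv : ∀ m : Fin D,
      deriv (fun t => G i ab (Function.update ai m t)) (ai m)
        = C * c m / (2 * (ai m) ^ 2 * (A + S) ^ 2) := by
    intro m
    have hfun : (fun t => G i ab (Function.update ai m t))
        = fun t => C / (2 * (A + (c m / t + (S - c m / ai m)))) := by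
      funext t
      rw [hG]
      congr 2
      have hsum : (∑ k, (σ i k) ^ 2 * (w k) ^ 2 / Function.update ai m t k)
          = c m / t + (S - c m / ai m) := by
        have h1 : (fun k => (σ i k) ^ 2 * (w k) ^ 2 / Function.update ai m t k)
            = Function.update (fun k => c k / ai k) m (c m / t) := by
          funext k
          rcases eq_or_ne k m with rfl | h
          · simp [hcdef]
          · simp [Function.update_of_ne h, hcdef]
        rw [h1, Finset.sum_update_of_mem (Finset.mem_univ m)]
        congr 1
        rw [Finset.sdiff_singleton_eq_erase,
          Finset.sum_erase_eq_sub (Finset.mem_univ m)]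
      rw [hsum]
    rw [hfun]
    have hdm : A + (c m / ai m + (S - c m / ai m)) ≠ 0 := by
      have h : A + (c m / ai m + (S - c m / ai m)) = A + S := by ring
      rw [h]; exact hAS.ne'
    rw [deriv_key C A (c m) (S - c m / ai m) (ai m) (hai m).ne' hdm]
    congr 2
    ring
  rw [hderiv j, hderiv j']
  set s := σ i j * w j with hsdef
  set s' := σ i j' * w j' with hs'def
  have hs : 0 < s := mul_pos (hσ i j) (hw j)
  have hs' : 0 < s' := mul_pos (hσ i j') (hw j')
  have ha : 0 < ai j := hai j
  have ha' : 0 < ai j' := hai j'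
  have hcj : c j = s ^ 2 := by rw [hcdef]; ring
  have hcj' : c j' = s' ^ 2 := by rw [hcdef]; ring
  rw [hcj, hcj']
  have hKne : C / (2 * (A + S) ^ 2) ≠ 0 := by
    apply div_ne_zero hC.ne'
    exact (mul_pos two_pos hd2).ne'
  have e1 : C * s ^ 2 / (2 * (ai j) ^ 2 * (A + S) ^ 2)
      = C / (2 * (A + S) ^ 2) * (s / ai j) ^ 2 :=
    e_aux C ((A + S) ^ 2) (ai j) s ha.ne' hd2.ne'
  have e2 : C * s' ^ 2 / (2 * (ai j') ^ 2 * (A + S) ^ 2)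
      = C / (2 * (A + S) ^ 2) * (s' / ai j') ^ 2 :=
    e_aux C ((A + S) ^ 2) (ai j') s' ha'.ne' hd2.ne'
  rw [e1, e2, mul_right_inj' hKne]
  have hsq : (s / ai j) ^ 2 = (s' / ai j') ^ 2 ↔ s / ai j = s' / ai j' :=
    sq_iff_of_pos _ _ (div_pos hs ha) (div_pos hs' ha')
  rw [hsq, div_eq_div_iff ha.ne' ha'.ne', div_eq_div_iff hs.ne' hs'.ne']
  constructor <;> intro h <;>
    linear_combination (norm := (simp only [hsdef, hs'def]; ring)) -h
end

section
/- Let α be a strictly positive allocation (α_{i,j} > 0 for all 1 ≤ i ≤ K, 1 ≤ j ≤ D). For each fixed 1 ≤ j ≤ D, the identity Σ_{i ≠ b} [ (∂G_i/∂α_{b,j}(α_b, α_i)) / (∂G_i/∂α_{i,j}(α_b, α_i)) ] = 1 holds if and only if (α_{b,j}/σ_{b,j})² = Σ_{i ≠ b} (α_{i,j}/σ_{i,j})². -/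
/-!
Only the `j`-th summands of the two variance sums depend on `α_{b,j}` resp. `α_{i,j}`, so both
partial derivatives of `G_i = C / (2 S)` have the form `C (σ² w² / α²) / (2 S²)` with the same `C`
and `S`. In their ratio everything but `(α_{i,j}/σ_{i,j})² / (α_{b,j}/σ_{b,j})²` cancels, so the
ratios share the denominator `(α_{b,j}/σ_{b,j})²`.
-/

open Finset Function

section

variable {ι : Type*} [Fintype ι] [DecidableEq ι]

lemma sum_div_update (p x : ι → ℝ) (j : ι) (t : ℝ) :
    ∑ k, p k / update x j t k = p j * t⁻¹ + (∑ k, p k / x k - p j / x j) := by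
  rw [← add_sum_erase _ _ (mem_univ j), ← add_sum_erase _ _ (mem_univ j), update_self]
  have hrest : ∑ k ∈ univ.erase j, p k / update x j t k = ∑ k ∈ univ.erase j, p k / x k :=
    sum_congr rfl fun k hk => by rw [update_of_ne (ne_of_mem_erase hk)]
  rw [hrest]
  ring

lemma hasDerivAt_sum_div_update (p x : ι → ℝ) (j : ι) (hx : x j ≠ 0) :
    HasDerivAt (fun t => ∑ k, p k / update x j t k) (-(p j / x j ^ 2)) (x j) := by
  simp only [sum_div_update]
  exact (((hasDerivAt_inv hx).const_mul (p j)).add_const _).congr_deriv (by ring)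

lemma HasDerivAt.const_div_two_mul {f : ℝ → ℝ} {f' t : ℝ} (C : ℝ) (hf : HasDerivAt f f' t)
    (h : f t ≠ 0) : HasDerivAt (fun s => C / (2 * f s)) (-(C * f') / (2 * f t ^ 2)) t :=
  ((hasDerivAt_const t C).div (hf.const_mul 2) (mul_ne_zero two_ne_zero h)).congr_deriv
    (by field_simp; ring)

lemma deriv_div_deriv_const_div_sum_div_update {C : ℝ} (hC : C ≠ 0) {p q x y : ι → ℝ} {j : ι}
    (hx : x j ≠ 0) (hy : y j ≠ 0) (hq : q j ≠ 0) (hS : ∑ k, p k / x k + ∑ k, q k / y k ≠ 0) :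
    deriv (fun t => C / (2 * (∑ k, p k / update x j t k + ∑ k, q k / y k))) (x j) /
        deriv (fun t => C / (2 * (∑ k, p k / x k + ∑ k, q k / update y j t k))) (y j)
      = (p j / x j ^ 2) / (q j / y j ^ 2) := by
  have hderiv_x := (((hasDerivAt_sum_div_update p x j hx).add_const
    (∑ k, q k / y k)).const_div_two_mul C (by simpa only [update_eq_self] using hS)).deriv
  have hderiv_y := (((hasDerivAt_sum_div_update q y j hy).const_add
    (∑ k, p k / x k)).const_div_two_mul C (by simpa only [update_eq_self] using hS)).deriv
  simp only [update_eq_self] at hderiv_x hderiv_y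
  rw [hderiv_x, hderiv_y]
  field_simp

end

theorem stmt_11_general
    {K D : ℕ}
    (b : Fin K)
    (σ : Fin K → Fin D → ℝ) (hσ : ∀ i j, 0 < σ i j)
    (w : Fin D → ℝ) (hw : ∀ j, 0 < w j)
    (μbar : Fin K → ℝ)
    (hbest : ∀ i, i ≠ b → μbar i < μbar b)
    (G : Fin K → (Fin K → Fin D → ℝ) → ℝ)
    (hG : ∀ i α, G i α = (μbar b - μbar i) ^ 2 /
        (2 * (∑ j, (σ b j) ^ 2 * (w j) ^ 2 / α b j
            + ∑ j, (σ i j) ^ 2 * (w j) ^ 2 / α i j)))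
    (α : Fin K → Fin D → ℝ) (hα : ∀ i j, 0 < α i j) :
    ∀ j : Fin D,
      ((∑ i ∈ univ.erase b,
          (deriv (fun t => G i (Function.update α b (Function.update (α b) j t))) (α b j)) /
          (deriv (fun t => G i (Function.update α i (Function.update (α i) j t))) (α i j))) = 1
        ↔ (α b j / σ b j) ^ 2 = ∑ i ∈ univ.erase b, (α i j / σ i j) ^ 2) := by
  intro j
  have hratio : ∀ i ∈ univ.erase b,
      deriv (fun t => G i (update α b (update (α b) j t))) (α b j) /
          deriv (fun t => G i (update α i (update (α i) j t))) (α i j)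
        = (α i j / σ i j) ^ 2 / (α b j / σ b j) ^ 2 := by
    intro i hi
    have hib := ne_of_mem_erase hi
    have hσb := hσ b j; have hσi := hσ i j; have hwj := hw j
    have hαb := hα b j; have hαi := hα i j
    have hS : 0 < ∑ k, σ b k ^ 2 * w k ^ 2 / α b k + ∑ k, σ i k ^ 2 * w k ^ 2 / α i k :=
      add_pos_of_pos_of_nonneg
        (sum_pos (fun k _ => by have := hσ b k; have := hw k; have := hα b k; positivity)
          ⟨j, mem_univ j⟩)
        (sum_nonneg fun k _ => by have := hα i k; positivity)
    simp only [hG, update_self, update_of_ne hib, update_of_ne hib.symm]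
    rw [deriv_div_deriv_const_div_sum_div_update (pow_ne_zero 2 (sub_ne_zero.2 (hbest i hib).ne'))
      hαb.ne' hαi.ne' (by positivity) hS.ne']
    field_simp
  rw [sum_congr rfl hratio, ← sum_div,
    div_eq_one_iff_eq (by have := hα b j; have := hσ b j; positivity)]
  exact eq_comm

/-- For each input component `j`, the identity
`Σ_{i ≠ b} (∂G_i/∂α_{b,j}) / (∂G_i/∂α_{i,j}) = 1` holds if and only if the Total
Balance condition `(α_{b,j}/σ_{b,j})² = Σ_{i ≠ b} (α_{i,j}/σ_{i,j})²` holds. -/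
theorem stmt_11
    {K D : ℕ} (hK : 2 ≤ K) (hD : 1 ≤ D)
    (b : Fin K)
    (μ : Fin K → Fin D → ℝ)
    (σ : Fin K → Fin D → ℝ) (hσ : ∀ i j, 0 < σ i j)
    (w : Fin D → ℝ) (hw : ∀ j, 0 < w j) (hw1 : ∑ j, w j = 1)
    (μbar : Fin K → ℝ) (hμbar : ∀ i, μbar i = ∑ j, w j * μ i j)
    (hbest : ∀ i, i ≠ b → μbar i < μbar b)
    (G : Fin K → (Fin K → Fin D → ℝ) → ℝ)
    (hG : ∀ i α, G i α = (μbar b - μbar i) ^ 2 /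
        (2 * (∑ j, (σ b j) ^ 2 * (w j) ^ 2 / α b j
            + ∑ j, (σ i j) ^ 2 * (w j) ^ 2 / α i j)))
    (α : Fin K → Fin D → ℝ) (hα : ∀ i j, 0 < α i j) :
    ∀ j : Fin D,
      ((∑ i ∈ univ.erase b,
          (deriv (fun t => G i (Function.update α b (Function.update (α b) j t))) (α b j)) /
          (deriv (fun t => G i (Function.update α i (Function.update (α i) j t))) (α i j))) = 1
        ↔ (α b j / σ b j) ^ 2 = ∑ i ∈ univ.erase b, (α i j / σ i j) ^ 2) :=
  stmt_11_general b σ hσ w hw μbar hbest G hG α hα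
end

section
/- Let α be a strictly positive allocation satisfying the input-balance equations α_{i,j}/(σ_{i,j} w_j) = α_{i,j'}/(σ_{i,j'} w_{j'}) for all i ≠ b and all j, j', together with the total-balance equations (α_{b,j}/σ_{b,j})² = Σ_{i ≠ b} (α_{i,j}/σ_{i,j})² for all j. Then the ratio α_{b,j}/(σ_{b,j} w_j) does not depend on j either; consequently there exist β_1, …, β_K > 0 such that α_{i,j} = w_j σ_{i,j} β_i for all 1 ≤ i ≤ K and 1 ≤ j ≤ D, and these β satisfy β_b² = Σ_{i ≠ b} β_i². -/
open Finset

/-! Normalise every column by `σ_{i,j} w_j`, i.e. set `r_{i,j} := α_{i,j} / (σ_{i,j} w_j)`.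
Total balance is homogeneous of degree two in each column, so it survives the normalisation:
`r_{b,j}² = Σ_{i ≠ b} r_{i,j}²`. By input balance the right-hand side does not depend on `j`,
hence neither does the positive number `r_{b,j}`, and `β_i := r_{i,j}` for any fixed `j` works. -/

theorem eq_of_sq_eq_sum_sq_of_forall_eq {ι κ : Type*} (s : Finset ι) (r : ι → κ → ℝ)
    (x : κ → ℝ) (hx : ∀ j, 0 ≤ x j) (hr : ∀ i ∈ s, ∀ j j', r i j = r i j')
    (hsum : ∀ j, x j ^ 2 = ∑ i ∈ s, r i j ^ 2) (j j' : κ) : x j = x j' := by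
  rw [← sq_eq_sq₀ (hx j) (hx j'), hsum, hsum]
  exact sum_congr rfl fun i hi => by rw [hr i hi j j']

theorem div_mul_sq_eq_sum_div_mul_sq {ι : Type*} {s : Finset ι} {a : ℝ} {v : ι → ℝ}
    {σ : ℝ} {τ : ι → ℝ} (w : ℝ) (h : (a / σ) ^ 2 = ∑ i ∈ s, (v i / τ i) ^ 2) :
    (a / (σ * w)) ^ 2 = ∑ i ∈ s, (v i / (τ i * w)) ^ 2 := by
  simp only [div_mul_eq_div_div, div_pow, ← sum_div, h]

theorem eq_mul_mul_div_mul {a σ w : ℝ} (hσ : σ ≠ 0) (hw : w ≠ 0) :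
    a = w * σ * (a / (σ * w)) := by
  rw [mul_comm w, mul_div_cancel₀ a (mul_ne_zero hσ hw)]

theorem stmt_12_general
    {K D : ℕ} (hD : 1 ≤ D)
    (b : Fin K)
    (σ : Fin K → Fin D → ℝ) (hσ : ∀ i j, 0 < σ i j)
    (w : Fin D → ℝ) (hw : ∀ j, 0 < w j)
    (α : Fin K → Fin D → ℝ) (hα : ∀ i j, 0 < α i j)
    (hinput : ∀ i, i ≠ b → ∀ j j' : Fin D,
      α i j / (σ i j * w j) = α i j' / (σ i j' * w j'))
    (htotal : ∀ j, (α b j / σ b j) ^ 2 = ∑ i ∈ univ.erase b, (α i j / σ i j) ^ 2) :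
    (∀ j j' : Fin D, α b j / (σ b j * w j) = α b j' / (σ b j' * w j')) ∧
    ∃ β : Fin K → ℝ, (∀ i, 0 < β i) ∧ (∀ i j, α i j = w j * σ i j * β i) ∧
      (β b) ^ 2 = ∑ i ∈ univ.erase b, (β i) ^ 2 := by
  set r : Fin K → Fin D → ℝ := fun i j => α i j / (σ i j * w j)
  have hr_pos : ∀ i j, 0 < r i j := fun i j => div_pos (hα i j) (mul_pos (hσ i j) (hw j))
  have hbalance : ∀ j, r b j ^ 2 = ∑ i ∈ univ.erase b, r i j ^ 2 := fun j =>
    div_mul_sq_eq_sum_div_mul_sq (w j) (htotal j)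
  have hbest : ∀ j j', r b j = r b j' :=
    eq_of_sq_eq_sum_sq_of_forall_eq _ r (r b) (fun j => (hr_pos b j).le)
      (fun i hi => hinput i (ne_of_mem_erase hi)) hbalance
  have hconst : ∀ i j j', r i j = r i j' := fun i => by
    rcases eq_or_ne i b with rfl | hi
    exacts [hbest, hinput i hi]
  let j₀ : Fin D := ⟨0, hD⟩
  refine ⟨hbest, fun i => r i j₀, fun i => hr_pos i j₀, fun i j => ?_, hbalance j₀⟩
  change α i j = w j * σ i j * r i j₀
  rw [← hconst i j j₀]
  exact eq_mul_mul_div_mul (hσ i j).ne' (hw j).ne'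

/-- Input balance plus total balance imply that the ratio `α_{b,j}/(σ_{b,j} w_j)` is also
independent of `j`, hence `α_{i,j} = w_j σ_{i,j} β_i` for some positive `β` with
`β_b² = Σ_{i ≠ b} β_i²`. -/
theorem stmt_12
    {K D : ℕ} (hK : 2 ≤ K) (hD : 1 ≤ D)
    (b : Fin K)
    (σ : Fin K → Fin D → ℝ) (hσ : ∀ i j, 0 < σ i j)
    (w : Fin D → ℝ) (hw : ∀ j, 0 < w j) (hw1 : ∑ j, w j = 1)
    (α : Fin K → Fin D → ℝ) (hα : ∀ i j, 0 < α i j)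
    (hinput : ∀ i, i ≠ b → ∀ j j' : Fin D,
      α i j / (σ i j * w j) = α i j' / (σ i j' * w j'))
    (htotal : ∀ j, (α b j / σ b j) ^ 2 = ∑ i ∈ univ.erase b, (α i j / σ i j) ^ 2) :
    (∀ j j' : Fin D, α b j / (σ b j * w j) = α b j' / (σ b j' * w j')) ∧
    ∃ β : Fin K → ℝ, (∀ i, 0 < β i) ∧ (∀ i j, α i j = w j * σ i j * β i) ∧
      (β b) ^ 2 = ∑ i ∈ univ.erase b, (β i) ^ 2 :=
  stmt_12_general hD b σ hσ w hw α hα hinput htotal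
end

section
/- Assume μ_b > μ_i for all i ≠ b, and set S_i = Σ_{j=1}^D σ_{i,j} w_j > 0 for each 1 ≤ i ≤ K. Then there exists exactly one vector η = (η_i)_{i ≠ b} with all η_i > 0 and Σ_{i ≠ b} η_i² = 1 such that the quantities (μ_b − μ_i)² / ( S_b + S_i / η_i ) are equal for all i ≠ b. -/
open Finset

private lemma phi_mono {s sb c x y : ℝ} (hs : 0 < s) (hsb : 0 < sb) (hc : 0 < c)
    (hx : 0 ≤ x) (hxy : x < y) (hy : y * sb < c) :
    s * x / (c - x * sb) < s * y / (c - y * sb) := by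
  have hdy : 0 < c - y * sb := by linarith
  have hdx : 0 < c - x * sb := by nlinarith
  rw [div_lt_div_iff₀ hdx hdy]
  nlinarith [mul_pos hs hc, mul_pos (mul_pos hs hc) (sub_pos.mpr hxy)]

private lemma key_lemma {ι : Type*} [Fintype ι] [Nonempty ι]
    (c s : ι → ℝ) (sb : ℝ)
    (hc : ∀ i, 0 < c i) (hs : ∀ i, 0 < s i) (hsb : 0 < sb) :
    ∃! η : ι → ℝ, (∀ i, 0 < η i) ∧ (∑ i, η i ^ 2 = 1) ∧
      (∀ i i', c i / (sb + s i / η i) = c i' / (sb + s i' / η i')) := by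
  classical
  set φ : ι → ℝ → ℝ := fun i t => s i * t / (c i - t * sb) with hφ
  set F : ℝ → ℝ := fun t => ∑ i, (φ i t) ^ 2 with hFdef
  obtain ⟨i₀, -, hi₀⟩ := Finset.exists_min_image (univ : Finset ι)
    (fun i => c i / (s i + sb)) univ_nonempty
  set L := c i₀ / (s i₀ + sb) with hLdef
  have hLpos : 0 < L := div_pos (hc i₀) (by linarith [hs i₀])
  have hLlt : ∀ i, L * sb < c i := by
    intro i
    have h1 : L ≤ c i / (s i + sb) := hi₀ i (mem_univ i)
    have h2 : c i / (s i + sb) * sb < c i := by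
      rw [div_mul_eq_mul_div, div_lt_iff₀ (by linarith [hs i])]
      nlinarith [hc i, hs i]
    calc L * sb ≤ c i / (s i + sb) * sb := by nlinarith
      _ < c i := h2
  -- denominators positive on [0, L]
  have hden : ∀ t, t ≤ L → ∀ i, 0 < c i - t * sb := by
    intro t ht i
    have := hLlt i
    nlinarith
  have hφL : φ i₀ L = 1 := by
    have hne : s i₀ + sb ≠ 0 := by have := hs i₀; intro h; linarith
    have h1 : c i₀ - L * sb = L * s i₀ := by
      rw [hLdef]; field_simp; ring
    rw [hφ]; simp only
    rw [h1, mul_comm (s i₀) L, div_self (ne_of_gt (mul_pos hLpos (hs i₀)))]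
  have hF0 : F 0 = 0 := by
    simp [hFdef, hφ]
  have hFL : 1 ≤ F L := by
    have h := Finset.single_le_sum (f := fun i => (φ i L) ^ 2)
      (fun i _ => sq_nonneg _) (mem_univ i₀)
    show (1:ℝ) ≤ ∑ i, (φ i L) ^ 2
    simpa [hφL] using h
  have hFcont : ContinuousOn F (Set.Icc 0 L) := by
    apply continuousOn_finset_sum
    intro i _
    apply ContinuousOn.pow
    apply ContinuousOn.div
    · exact (continuous_const.mul continuous_id).continuousOn
    · exact (continuous_const.sub (continuous_id.mul continuous_const)).continuousOn
    · intro t ht; exact ne_of_gt (hden t ht.2 i)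
  have h1mem : (1:ℝ) ∈ Set.Icc (F 0) (F L) := ⟨by rw [hF0]; norm_num, hFL⟩
  obtain ⟨lam, hlamIcc, hFlam⟩ := intermediate_value_Icc hLpos.le hFcont h1mem
  have hlampos : 0 < lam := by
    rcases lt_or_eq_of_le hlamIcc.1 with h | h
    · exact h
    · exfalso; rw [← h] at hFlam; rw [hF0] at hFlam; norm_num at hFlam
  -- strict monotonicity of F
  have hmono : ∀ x y, 0 ≤ x → x < y → (∀ i, y * sb < c i) → F x < F y := by
    intro x y hx hxy hy
    apply Finset.sum_lt_sum_of_nonempty univ_nonempty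
    intro i _
    have h1 : φ i x < φ i y := phi_mono (hs i) hsb (hc i) hx hxy (hy i)
    have h0 : 0 ≤ φ i x := by
      apply div_nonneg (mul_nonneg (hs i).le hx)
      have : y * sb < c i := hy i
      nlinarith
    exact pow_lt_pow_left₀ h1 h0 two_ne_zero
  -- the candidate
  have hdenl : ∀ i, 0 < c i - lam * sb := hden lam hlamIcc.2
  have hηpos : ∀ i, 0 < φ i lam := fun i =>
    div_pos (mul_pos (hs i) hlampos) (hdenl i)
  have hval : ∀ i, c i / (sb + s i / φ i lam) = lam := by
    intro i
    have hne : c i - lam * sb ≠ 0 := ne_of_gt (hdenl i)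
    have h1 : sb + s i / φ i lam = c i / lam := by
      rw [hφ]; simp only
      rw [div_div_eq_mul_div]
      field_simp [ne_of_gt (hs i), ne_of_gt hlampos]
      ring
    rw [h1, div_div_eq_mul_div, mul_comm, mul_div_assoc,
      div_self (ne_of_gt (hc i)), mul_one]
  refine ⟨fun i => φ i lam, ⟨hηpos, hFlam, fun i i' => by rw [hval i, hval i']⟩, ?_⟩
  rintro η' ⟨hpos', hsum', heq'⟩
  obtain j₀ : ι := Classical.arbitrary ι
  set lam' := c j₀ / (sb + s j₀ / η' j₀) with hlam'def
  have hdpos : ∀ i, 0 < sb + s i / η' i := fun i => by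
    have := div_pos (hs i) (hpos' i); linarith
  have hlam'pos : 0 < lam' := div_pos (hc j₀) (hdpos j₀)
  have hlam'lt : ∀ i, lam' * sb < c i := by
    intro i
    have h3 : lam' = c i / (sb + s i / η' i) := (heq' i j₀).symm
    have hd : sb < sb + s i / η' i := by
      have := div_pos (hs i) (hpos' i); linarith
    rw [h3, div_mul_eq_mul_div, div_lt_iff₀ (hdpos i)]
    nlinarith [hc i]
  have hlden : ∀ i, 0 < c i - lam' * sb := fun i => by linarith [hlam'lt i]
  have h4 : ∀ i, η' i = φ i lam' := by
    intro i
    have hηne : η' i ≠ 0 := ne_of_gt (hpos' i)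
    have h3 : c i = lam' * (sb + s i / η' i) :=
      (div_eq_iff (ne_of_gt (hdpos i))).mp (heq' i j₀)
    have h6 : lam' * (s i / η' i) = c i - lam' * sb := by rw [h3]; ring
    have h7 : η' i * (c i - lam' * sb) = s i * lam' := by
      calc η' i * (c i - lam' * sb) = η' i * (lam' * (s i / η' i)) := by rw [h6]
        _ = s i * lam' := by field_simp
    rw [hφ]; simp only
    exact (eq_div_iff (ne_of_gt (hlden i))).mpr h7
  have hFlam' : F lam' = 1 := by
    rw [hFdef]; simp only
    rw [← hsum']
    exact Finset.sum_congr rfl fun i _ => by rw [h4 i]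
  have hlam'le : lam' ≤ L := by
    by_contra h
    push_neg at h
    have h1 : φ i₀ L < φ i₀ lam' :=
      phi_mono (hs i₀) hsb (hc i₀) hLpos.le h (hlam'lt i₀)
    rw [hφL] at h1
    have h2 : (1:ℝ) < (φ i₀ lam') ^ 2 := by nlinarith
    have h3 : (φ i₀ lam') ^ 2 ≤ F lam' :=
      Finset.single_le_sum (f := fun i => (φ i lam') ^ 2)
        (fun i _ => sq_nonneg _) (mem_univ i₀)
    rw [hFlam'] at h3
    linarith
  have hlameq : lam' = lam := by
    rcases lt_trichotomy lam' lam with h | h | h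
    · have := hmono lam' lam hlam'pos.le h (fun i => by
        have := hLlt i; nlinarith [hlamIcc.2])
      rw [hFlam', hFlam] at this; linarith
    · exact h
    · have := hmono lam lam' hlampos.le h hlam'lt
      rw [hFlam', hFlam] at this; linarith
  funext i
  rw [h4 i, hlameq]

/-- There is a unique positive vector `η` on the non-best designs with `Σ η_i² = 1`
equalizing the quantities `(μ_b − μ_i)² / (S_b + S_i/η_i)`. -/
theorem stmt_13
    {K D : ℕ} (hK : 2 ≤ K) (hD : 1 ≤ D)
    (b : Fin K)
    (μ : Fin K → Fin D → ℝ)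
    (σ : Fin K → Fin D → ℝ) (hσ : ∀ i j, 0 < σ i j)
    (w : Fin D → ℝ) (hw : ∀ j, 0 < w j) (hw1 : ∑ j, w j = 1)
    (μbar : Fin K → ℝ) (hμbar : ∀ i, μbar i = ∑ j, w j * μ i j)
    (hbest : ∀ i, i ≠ b → μbar i < μbar b)
    (S : Fin K → ℝ) (hS : ∀ i, S i = ∑ j, σ i j * w j) :
    ∃! η : {i : Fin K // i ≠ b} → ℝ,
      (∀ i, 0 < η i) ∧ (∑ i, (η i) ^ 2 = 1) ∧
      (∀ i i' : {i : Fin K // i ≠ b},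
        (μbar b - μbar i.1) ^ 2 / (S b + S i.1 / η i)
          = (μbar b - μbar i'.1) ^ 2 / (S b + S i'.1 / η i')) := by
  have hne : Nonempty {i : Fin K // i ≠ b} := by
    by_cases h : (⟨0, by omega⟩ : Fin K) = b
    · refine ⟨⟨⟨1, by omega⟩, ?_⟩⟩
      rw [← h]; simp [Fin.ext_iff]
    · exact ⟨⟨_, h⟩⟩
  have hDne : (univ : Finset (Fin D)).Nonempty := ⟨⟨0, by omega⟩, mem_univ _⟩
  have hSpos : ∀ i, 0 < S i := by
    intro i
    rw [hS]
    exact Finset.sum_pos (fun j _ => mul_pos (hσ i j) (hw j)) hDne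
  exact key_lemma (fun i : {i : Fin K // i ≠ b} => (μbar b - μbar i.1) ^ 2)
    (fun i => S i.1) (S b)
    (fun i => pow_pos (sub_pos.mpr (hbest i.1 i.2)) 2)
    (fun i => hSpos i.1) (hSpos b)
end

section
/- Let F_1, …, F_D be probability measures on a measurable space, and for a weight vector w let F^w = Σ_{j=1}^D w_j F_j. Suppose w^c is a weight vector with all entries strictly positive and that the mixture family is identifiable at w^c, i.e. F^w ≠ F^{w^c} for every weight vector w ≠ w^c. Then there exists a constant c > 0 such that TV(F^w, F^{w^c}) ≥ c ‖w − w^c‖_∞ for every weight vector w. -/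
/-!
For `v ∈ ℝ^D` let `N v = sup_A |∑ j, v j * F_j(A)|`; this is a seminorm, bounded by a multiple of
`‖v‖`, and `TV(F^w, F^u) = N (w - u)` for weight vectors `w, u`. Because `w^c` lies in the interior
of the simplex, every direction `v ≠ 0` with `∑ j, v j = 0` is realised as `w - w^c = ε v` for some
weight vector `w` and `ε > 0`, so identifiability makes `N` positive on the nonzero vectors of the
hyperplane `∑ j, v j = 0`. By compactness, `N` has a positive minimum `c` on the unit sphere of
that hyperplane, and homogeneity gives `N v ≥ c ‖v‖` there.
-/

open MeasureTheory

noncomputable def tvDist {Ω : Type*} [MeasurableSpace Ω] (P Q : Measure Ω) : ℝ :=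
  ⨆ A : {A : Set Ω // MeasurableSet A}, |(P A.1).toReal - (Q A.1).toReal|

noncomputable def mixture {Ω : Type*} [MeasurableSpace Ω] {D : ℕ}
    (F : Fin D → Measure Ω) (w : Fin D → ℝ) : Measure Ω :=
  ∑ j, ENNReal.ofReal (w j) • F j

open Filter Topology

namespace Seminorm

variable {E : Type*}

theorem continuous_of_le_mul_norm [SeminormedAddCommGroup E] [NormedSpace ℝ E]
    (p : Seminorm ℝ E) (C : ℝ) (h : ∀ x, p x ≤ C * ‖x‖) : Continuous p :=
  Seminorm.continuous_of_le (q := C.toNNReal • normSeminorm ℝ E)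
    (continuous_const.mul continuous_norm) fun x => by
      simpa [NNReal.smul_def] using (h x).trans (by gcongr; exact C.le_coe_toNNReal)

theorem exists_pos_mul_norm_le [NormedAddCommGroup E] [NormedSpace ℝ E] [FiniteDimensional ℝ E]
    (p : Seminorm ℝ E) (hp : Continuous p) (S : Submodule ℝ E)
    (hpos : ∀ x ∈ S, x ≠ 0 → 0 < p x) : ∃ c, 0 < c ∧ ∀ x ∈ S, c * ‖x‖ ≤ p x := by
  set K := (S : Set E) ∩ Metric.sphere 0 1
  have hK : IsCompact K := (isCompact_sphere 0 1).inter_left S.closed_of_finiteDimensional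
  have normalize : ∀ x ∈ S, x ≠ 0 → ‖x‖⁻¹ • x ∈ K := fun x hx hx0 =>
    ⟨S.smul_mem _ hx, by simp [norm_smul, hx0]⟩
  rcases K.eq_empty_or_nonempty with hK0 | hKne
  · refine ⟨1, one_pos, fun x hx => ?_⟩
    obtain rfl : x = 0 := by_contra fun hx0 => by simpa [hK0] using normalize x hx hx0
    simp
  obtain ⟨x₀, hx₀, hmin⟩ := hK.exists_isMinOn hKne hp.continuousOn
  refine ⟨p x₀, hpos x₀ hx₀.1 (ne_zero_of_mem_sphere one_ne_zero ⟨x₀, hx₀.2⟩), fun x hx => ?_⟩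
  rcases eq_or_ne x 0 with rfl | hx0
  · simp
  have hx₀x : p x₀ ≤ ‖x‖⁻¹ * p x := by
    simpa only [Set.mem_ofPred_eq, map_smul_eq_mul, norm_inv, norm_norm] using
      hmin (normalize x hx hx0)
  rwa [le_inv_mul_iff₀ (norm_pos_iff.2 hx0), mul_comm] at hx₀x

end Seminorm

section MixtureSeminorm

variable {Ω ι : Type*} [MeasurableSpace Ω] [Fintype ι]
  (F : ι → Measure Ω) [∀ j, IsFiniteMeasure (F j)]

instance : Nonempty {A : Set Ω // MeasurableSet A} := ⟨⟨∅, .empty⟩⟩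

theorem abs_sum_mul_toReal_le (v : ι → ℝ) (A : Set Ω) :
    |∑ j, v j * (F j A).toReal| ≤ ∑ j, |v j| * (F j Set.univ).toReal := by
  refine (Finset.abs_sum_le_sum_abs _ _).trans (Finset.sum_le_sum fun j _ => ?_)
  rw [abs_mul, abs_of_nonneg ENNReal.toReal_nonneg]
  gcongr
  · exact measure_ne_top _ _
  · exact Set.subset_univ A

theorem bddAbove_range_abs_sum_mul_toReal (v : ι → ℝ) :
    BddAbove (Set.range fun A : {A : Set Ω // MeasurableSet A} => |∑ j, v j * (F j A).toReal|) :=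
  ⟨_, Set.forall_mem_range.2 fun A => abs_sum_mul_toReal_le F v A⟩

noncomputable def mixtureSeminorm : Seminorm ℝ (ι → ℝ) :=
  Seminorm.of (fun v => ⨆ A : {A : Set Ω // MeasurableSet A}, |∑ j, v j * (F j A).toReal|)
    (fun u v => by
      refine ciSup_le fun A => ?_
      simp only [Pi.add_apply, add_mul, Finset.sum_add_distrib]
      exact (abs_add_le _ _).trans (add_le_add
        (le_ciSup (bddAbove_range_abs_sum_mul_toReal F u) A)
        (le_ciSup (bddAbove_range_abs_sum_mul_toReal F v) A)))
    (fun t v => by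
      simp only [Pi.smul_apply, smul_eq_mul, mul_assoc, ← Finset.mul_sum, abs_mul,
        Real.norm_eq_abs, Real.mul_iSup_of_nonneg (abs_nonneg t)])

theorem mixtureSeminorm_apply (v : ι → ℝ) :
    mixtureSeminorm F v = ⨆ A : {A : Set Ω // MeasurableSet A}, |∑ j, v j * (F j A).toReal| :=
  rfl

theorem le_mixtureSeminorm (v : ι → ℝ) {A : Set Ω} (hA : MeasurableSet A) :
    |∑ j, v j * (F j A).toReal| ≤ mixtureSeminorm F v :=
  le_ciSup (bddAbove_range_abs_sum_mul_toReal F v) ⟨A, hA⟩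

theorem continuous_mixtureSeminorm : Continuous (mixtureSeminorm F) := by
  refine (mixtureSeminorm F).continuous_of_le_mul_norm
    (∑ j, (F j Set.univ).toReal) fun v => ?_
  refine ciSup_le fun A => (abs_sum_mul_toReal_le F v A).trans ?_
  rw [Finset.sum_mul]
  refine Finset.sum_le_sum fun j _ => ?_
  rw [mul_comm]
  exact mul_le_mul_of_nonneg_left (norm_le_pi_norm v j) ENNReal.toReal_nonneg

end MixtureSeminorm

section Mixture

variable {Ω : Type*} [MeasurableSpace Ω] {D : ℕ}
  (F : Fin D → Measure Ω) [∀ j, IsFiniteMeasure (F j)]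

instance (w : Fin D → ℝ) : IsFiniteMeasure (mixture F w) := by
  have := fun j => (F j).smul_finite (ENNReal.ofReal_ne_top (r := w j))
  unfold mixture
  infer_instance

theorem mixture_apply_toReal {w : Fin D → ℝ} (hw : ∀ j, 0 ≤ w j) (A : Set Ω) :
    (mixture F w A).toReal = ∑ j, w j * (F j A).toReal := by
  rw [mixture, Measure.finsetSum_apply, ENNReal.toReal_sum fun j _ => by
    simpa using ENNReal.mul_ne_top ENNReal.ofReal_ne_top (measure_ne_top (F j) A)]
  simp [ENNReal.toReal_ofReal (hw _)]

theorem tvDist_mixture {w u : Fin D → ℝ} (hw : ∀ j, 0 ≤ w j) (hu : ∀ j, 0 ≤ u j) :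
    tvDist (mixture F w) (mixture F u) = mixtureSeminorm F (w - u) := by
  simp only [tvDist, mixtureSeminorm_apply, mixture_apply_toReal F hw, mixture_apply_toReal F hu,
    ← Finset.sum_sub_distrib, Pi.sub_apply, sub_mul]

theorem mixtureSeminorm_sub_pos_of_ne {w u : Fin D → ℝ} (hw : ∀ j, 0 ≤ w j) (hu : ∀ j, 0 ≤ u j)
    (h : mixture F w ≠ mixture F u) : 0 < mixtureSeminorm F (w - u) := by
  obtain ⟨A, hA, hne⟩ : ∃ A, MeasurableSet A ∧ mixture F w A ≠ mixture F u A := by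
    by_contra! h'
    exact h (Measure.ext h')
  refine (abs_pos.2 ?_).trans_le (le_mixtureSeminorm F _ hA)
  simp only [Pi.sub_apply, sub_mul, Finset.sum_sub_distrib, ← mixture_apply_toReal F hw,
    ← mixture_apply_toReal F hu, sub_ne_zero]
  exact (ENNReal.toReal_eq_toReal_iff' (measure_ne_top _ _) (measure_ne_top _ _)).not.2 hne

theorem mixtureSeminorm_pos_of_identifiable {wc : Fin D → ℝ} (hwc : ∀ j, 0 < wc j)
    (hwc1 : ∑ j, wc j = 1)
    (hident : ∀ w : Fin D → ℝ, (∀ j, 0 ≤ w j) → ∑ j, w j = 1 → w ≠ wc →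
      mixture F w ≠ mixture F wc)
    {v : Fin D → ℝ} (hv : v ≠ 0) (hv0 : ∑ j, v j = 0) : 0 < mixtureSeminorm F v := by
  have hopen : IsOpen {w : Fin D → ℝ | ∀ j, 0 < w j} := by
    simpa only [Set.ofPred_forall] using
      isOpen_iInter_of_finite fun j => isOpen_lt continuous_const (continuous_apply j)
  have hline : Tendsto (fun ε : ℝ => wc + ε • v) (𝓝 0) (𝓝 wc) :=
    ((continuous_const (y := wc)).add (continuous_id.smul (continuous_const (y := v)))).tendsto'
      0 wc (by simp)
  obtain ⟨ε, hε, hpos⟩ := (Filter.Eventually.and self_mem_nhdsWithin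
    (nhdsWithin_le_nhds (hline.eventually (hopen.mem_nhds hwc)))).exists (f := 𝓝[>] (0 : ℝ))
  set w := wc + ε • v
  have hw1 : ∑ j, w j = 1 := by
    simp [w, Finset.sum_add_distrib, ← Finset.mul_sum, hv0, hwc1]
  have hne : w ≠ wc := by simpa [w, hε.ne'] using hv
  have := mixtureSeminorm_sub_pos_of_ne F (fun j => (hpos j).le) (fun j => (hwc j).le)
    (hident w (fun j => (hpos j).le) hw1 hne)
  rwa [show w - wc = ε • v by simp [w], map_smul_eq_mul, Real.norm_of_nonneg hε.le,
    mul_pos_iff_of_pos_left hε] at this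

end Mixture

/-- If the mixture family is identifiable at an interior weight vector `w^c`, then the
total variation distance to `F^{w^c}` is bounded below by a positive multiple of the
sup-norm distance of the weights. -/
theorem stmt_18
    {Ω : Type*} [MeasurableSpace Ω]
    {D : ℕ} (F : Fin D → Measure Ω) (hF : ∀ j, IsProbabilityMeasure (F j))
    (wc : Fin D → ℝ) (hwc : ∀ j, 0 < wc j) (hwc1 : ∑ j, wc j = 1)
    (hident : ∀ w : Fin D → ℝ, (∀ j, 0 ≤ w j) → ∑ j, w j = 1 → w ≠ wc →
      mixture F w ≠ mixture F wc) :
    ∃ c : ℝ, 0 < c ∧ ∀ w : Fin D → ℝ, (∀ j, 0 ≤ w j) → ∑ j, w j = 1 →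
      c * ‖w - wc‖ ≤ tvDist (mixture F w) (mixture F wc) := by
  obtain ⟨c, hc, hcS⟩ := (mixtureSeminorm F).exists_pos_mul_norm_le (continuous_mixtureSeminorm F)
    (LinearMap.ker (∑ j, LinearMap.proj j)) fun v hv hv0 =>
      mixtureSeminorm_pos_of_identifiable F hwc hwc1 hident hv0 (by simpa using hv)
  refine ⟨c, hc, fun w hw hw1 => ?_⟩
  rw [tvDist_mixture F hw fun j => (hwc j).le]
  exact hcS _ (by simp [Finset.sum_sub_distrib, hw1, hwc1])
end
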